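/- arXiv:2311.18501 — 11 statements merged into one kernel-verified Lean document; each statement's English description precedes it below -/
import Mathlib

section
/- Let d ≥ 1, let 𝒵 ⊆ ℝ^d, and let f : ℝ^d → ℝ be (Fréchet) differentiable at every point of 𝒵. Let ε > 0 and let ψ : 𝒵 × [0, ε) → ℝ^d satisfy ψ(z, 0) = z for all z ∈ 𝒵, and suppose that for each z ∈ 𝒵 the one-sided derivative ω(z) := ∂_γ ψ(z, γ)|_{γ=0} exists. Let 𝒲 be a set, for each w ∈ 𝒲 let ℒ_w ⊆ ℝ, and suppose φ = (φ^L, φ^W) : 𝒵 → {(ℓ, w) : w ∈ 𝒲, ℓ ∈ ℒ_w} is a bijection whose inverse Φ := φ^{-1} satisfies, for every w ∈ 𝒲 and every ℓ ∈ ℒ_w, that ℓ' ↦ Φ(ℓ', w) is differentiable at ℓ with ∂_ℓ Φ(ℓ, w) = ω(Φ(ℓ, w)). Then for every z ∈ 𝒵 with (ℓ, w) := φ(z), the one-sided derivative ∂_γ f(ψ(z, γ))|_{γ=0} exists and equals the derivative ∂_{ℓ'} f(Φ(ℓ', w))|_{ℓ'=ℓ}; both equal ⟨∇f(z), ω(z)⟩.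 Consequently, if Z is a random vector taking values in 𝒵 with (L, W) := φ(Z) and both expectations exist, then E[∂_γ f(ψ(Z, γ))|_{γ=0}] = E[∂_{ℓ} g(ℓ, W)|_{ℓ=L}], where g(ℓ, w) := f(Φ(ℓ, w)). -/
open MeasureTheory Set

/-- Isolating derivatives (Euclidean/chart-level version): if `φ` is a
derivative-isolating reparametrization for the perturbation `ψ` with initial
velocity field `ω`, then for every `z ∈ 𝒵` the one-sided derivative of
`γ ↦ f(ψ(z, γ))` at `γ = 0` and the derivative of `ℓ' ↦ f(Φ(ℓ', w))` at
`ℓ = φ^L(z)` both exist and equal `⟨∇f(z), ω(z)⟩`; consequently, for a random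
vector `Z` with values in `𝒵`, the expectations of the two derivative
functionals coincide. -/
theorem stmt0
    (d : ℕ) (hd : 1 ≤ d)
    (𝒵 : Set (EuclideanSpace ℝ (Fin d)))
    (f : EuclideanSpace ℝ (Fin d) → ℝ)
    (hf : ∀ z ∈ 𝒵, DifferentiableAt ℝ f z)
    (ε : ℝ) (hε : 0 < ε)
    (ψ : EuclideanSpace ℝ (Fin d) → ℝ → EuclideanSpace ℝ (Fin d))
    (hψ0 : ∀ z ∈ 𝒵, ψ z 0 = z)
    (ω : EuclideanSpace ℝ (Fin d) → EuclideanSpace ℝ (Fin d))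
    (hω : ∀ z ∈ 𝒵, HasDerivWithinAt (fun γ => ψ z γ) (ω z) (Set.Ico (0 : ℝ) ε) 0)
    (𝒲 : Type*) (ℒ : 𝒲 → Set ℝ)
    (φ : EuclideanSpace ℝ (Fin d) → ℝ × 𝒲)
    (Φ : ℝ → 𝒲 → EuclideanSpace ℝ (Fin d))
    (hφ_mem : ∀ z ∈ 𝒵, (φ z).1 ∈ ℒ (φ z).2)
    (hΦφ : ∀ z ∈ 𝒵, Φ (φ z).1 (φ z).2 = z)
    (hΦ_mem : ∀ w : 𝒲, ∀ ℓ ∈ ℒ w, Φ ℓ w ∈ 𝒵)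
    (hφΦ : ∀ w : 𝒲, ∀ ℓ ∈ ℒ w, φ (Φ ℓ w) = (ℓ, w))
    (hΦ' : ∀ w : 𝒲, ∀ ℓ ∈ ℒ w, HasDerivAt (fun ℓ' => Φ ℓ' w) (ω (Φ ℓ w)) ℓ)
    (Ω : Type*) [MeasurableSpace Ω] (P : Measure Ω) [IsProbabilityMeasure P]
    (Z : Ω → EuclideanSpace ℝ (Fin d)) (hZ : ∀ a, Z a ∈ 𝒵)
    (hint : Integrable
      (fun a => derivWithin (fun γ => f (ψ (Z a) γ)) (Set.Ico (0 : ℝ) ε) 0) P)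
    (hint' : Integrable
      (fun a => deriv (fun ℓ' => f (Φ ℓ' (φ (Z a)).2)) ((φ (Z a)).1)) P) :
    (∀ z ∈ 𝒵,
      HasDerivWithinAt (fun γ => f (ψ z γ))
        (inner ℝ (gradient f z) (ω z) : ℝ) (Set.Ico (0 : ℝ) ε) 0 ∧
      HasDerivAt (fun ℓ' => f (Φ ℓ' (φ z).2))
        (inner ℝ (gradient f z) (ω z) : ℝ) (φ z).1) ∧
    ∫ a, derivWithin (fun γ => f (ψ (Z a) γ)) (Set.Ico (0 : ℝ) ε) 0 ∂P
      = ∫ a, deriv (fun ℓ' => f (Φ ℓ' (φ (Z a)).2)) ((φ (Z a)).1) ∂P := by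

  have key : ∀ z ∈ 𝒵,
      HasDerivWithinAt (fun γ => f (ψ z γ))
        (inner ℝ (gradient f z) (ω z) : ℝ) (Set.Ico (0 : ℝ) ε) 0 ∧
      HasDerivAt (fun ℓ' => f (Φ ℓ' (φ z).2))
        (inner ℝ (gradient f z) (ω z) : ℝ) (φ z).1 := by
    intro z hz
    have hF : HasFDerivAt f (InnerProductSpace.toDual ℝ _ (gradient f z)) z :=
      ((hf z hz).hasGradientAt).hasFDerivAt
    constructor
    · have h1 : HasDerivWithinAt (fun γ => f (ψ z γ))
          (InnerProductSpace.toDual ℝ _ (gradient f z) (ω z)) (Set.Ico (0 : ℝ) ε) 0 := by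
        have hF2 : HasFDerivAt f (InnerProductSpace.toDual ℝ _ (gradient f z)) (ψ z 0) := by
          rw [hψ0 z hz]; exact hF
        exact hF2.comp_hasDerivWithinAt 0 (hω z hz)
      simpa [InnerProductSpace.toDual_apply_apply] using h1
    · have hℓ := hφ_mem z hz
      have hΦ'z := hΦ' (φ z).2 (φ z).1 hℓ
      rw [hΦφ z hz] at hΦ'z
      have hF' : HasFDerivAt f (InnerProductSpace.toDual ℝ _ (gradient f z)) (Φ (φ z).1 (φ z).2) := by
        rw [hΦφ z hz]; exact hF
      have h2 := hF'.comp_hasDerivAt ((φ z).1) hΦ'z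
      simpa [InnerProductSpace.toDual_apply_apply, Function.comp_def] using h2
  refine ⟨key, integral_congr_ae (Filter.Eventually.of_forall fun a => ?_)⟩
  have hz := hZ a
  obtain ⟨h1, h2⟩ := key (Z a) hz
  have hu : UniqueDiffWithinAt ℝ (Set.Ico (0 : ℝ) ε) 0 :=
    uniqueDiffOn_Ico 0 ε 0 (by simp [hε])
  show derivWithin (fun γ => f (ψ (Z a) γ)) (Set.Ico (0 : ℝ) ε) 0
      = deriv (fun ℓ' => f (Φ ℓ' (φ (Z a)).2)) ((φ (Z a)).1)
  rw [h1.derivWithin hu, h2.deriv]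
end

section
/- Let d ≥ 2, Δ^{d−1} := {z ∈ [0,1]^d : Σ_{j=1}^d z^j = 1}, and let 𝒵 ⊆ Δ^{d−1}. Let E : 𝒵 → Δ^{d−1} be an endpoint function with E(z) ≠ z for all z ∈ 𝒵, and define the direction v_E(z) := (E(z) − z)/‖E(z) − z‖₁. For w = (w_E, w_v) ∈ Δ^{d−1} × ℝ^d let ℐ_w := {δ ∈ (0, ∞) : w_E − δ w_v ∈ Δ^{d−1}}. Let s be a positive function defined on all points w_E − δ w_v with w = (E(z), v_E(z)) for some z ∈ 𝒵 and δ ∈ ℐ_w, and for such w set s_w(δ) := s(w_E − δ w_v). Suppose that for each such w there is a differentiable function t_w : ℐ_w → ℝ with t_w′(δ) = −1/s_w(δ) for all δ ∈ ℐ_w. Define φ(z) := (t_{(E(z), v_E(z))}(‖E(z) − z‖₁), (E(z), v_E(z))). Then: (i) each t_w is strictly decreasing, hence invertible on t_w(ℐ_w); (ii) φ is injective on 𝒵, with inverse on its image given by φ^{-1}(ℓ, (w_E, w_v)) = w_E − t_w^{-1}(ℓ) w_v; and (iii) for every (ℓ, w) with w = (w_E, w_v) in the image of φ^W and ℓ in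 the interior of t_w(ℐ_w), the map ℓ′ ↦ w_E − t_w^{-1}(ℓ′) w_v is differentiable at ℓ with derivative s(φ^{-1}(ℓ, w)) · w_v. -/
open Set Topology Filter

/-- The probability simplex `Δ^{d-1} = {z ∈ [0,1]^d : Σ_j z^j = 1}`. -/
def simplex (d : ℕ) : Set (Fin d → ℝ) :=
  {z | (∀ j, z j ∈ Set.Icc (0 : ℝ) 1) ∧ ∑ j, z j = 1}

/-- The ℓ¹-norm `‖x‖₁ = Σ_j |x^j|`. -/
noncomputable def l1norm {d : ℕ} (x : Fin d → ℝ) : ℝ := ∑ j, |x j|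

/-- The γ-domain `ℐ_w = {δ > 0 : w_E − δ w_v ∈ Δ^{d-1}}` of the ray
`δ ↦ w_E − δ w_v` within the simplex. -/
def rayDomain {d : ℕ} (w : (Fin d → ℝ) × (Fin d → ℝ)) : Set ℝ :=
  {δ : ℝ | 0 < δ ∧ w.1 - δ • w.2 ∈ simplex d}

/-- The simplex coincides with mathlib's standard simplex. -/
lemma simplex_eq_stdSimplex (d : ℕ) : simplex d = stdSimplex ℝ (Fin d) := by
  ext z
  constructor
  · rintro ⟨h1, h2⟩
    exact ⟨fun j => (h1 j).1, h2⟩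
  · rintro ⟨h1, h2⟩
    refine ⟨fun j => ⟨h1 j, ?_⟩, h2⟩
    calc z j ≤ ∑ i, z i :=
          Finset.single_le_sum (fun i _ => h1 i) (Finset.mem_univ j)
      _ = 1 := h2

lemma convex_simplex (d : ℕ) : Convex ℝ (simplex d) := by
  rw [simplex_eq_stdSimplex]; exact convex_stdSimplex ℝ (Fin d)

lemma convex_rayDomain {d : ℕ} (w : (Fin d → ℝ) × (Fin d → ℝ)) :
    Convex ℝ (rayDomain w) := by
  intro x hx y hy a b ha hb hab
  obtain ⟨hx0, hxs⟩ := hx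
  obtain ⟨hy0, hys⟩ := hy
  constructor
  · rcases ha.lt_or_eq with h | h
    · have h1 : 0 < a * x := mul_pos h hx0
      have h2 : 0 ≤ b * y := mul_nonneg hb hy0.le
      show (0 : ℝ) < a • x + b • y
      simp only [smul_eq_mul]
      linarith
    · have hb1 : b = 1 := by linarith
      show (0 : ℝ) < a • x + b • y
      simp only [smul_eq_mul, ← h, hb1]
      linarith
  · have key : w.1 - (a • x + b • y) • w.2
        = a • (w.1 - x • w.2) + b • (w.1 - y • w.2) := by
      funext j
      simp only [Pi.add_apply, Pi.smul_apply, Pi.sub_apply, smul_eq_mul]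
      linear_combination w.1 j * hab.symm
    show w.1 - (a • x + b • y) • w.2 ∈ simplex d
    rw [key]
    exact convex_simplex d hxs hys ha hb hab

/-- Finding derivative-isolating reparametrizations from a given speed: if
`t_w` solves `t_w′(δ) = −1/s_w(δ)` on `ℐ_w`, then (i) each `t_w` is strictly
decreasing; (ii) `φ(z) = (t_{(E z, v_E z)}(‖E z − z‖₁), (E z, v_E z))` is
injective with inverse `φ⁻¹(ℓ, (w_E, w_v)) = w_E − t_w⁻¹(ℓ) w_v`; and
(iii) `ℓ′ ↦ w_E − t_w⁻¹(ℓ′) w_v` is differentiable with derivative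
`s(φ⁻¹(ℓ, w)) • w_v`. -/
theorem stmt1
    (d : ℕ) (hd : 2 ≤ d)
    (𝒵 : Set (Fin d → ℝ)) (h𝒵 : 𝒵 ⊆ simplex d)
    (E : (Fin d → ℝ) → (Fin d → ℝ))
    (hE : ∀ z ∈ 𝒵, E z ∈ simplex d ∧ E z ≠ z)
    (v : (Fin d → ℝ) → (Fin d → ℝ))
    (hv : ∀ z ∈ 𝒵, v z = (l1norm (E z - z))⁻¹ • (E z - z))
    (s : (Fin d → ℝ) → ℝ)
    (hs : ∀ z ∈ 𝒵, ∀ δ ∈ rayDomain (E z, v z), 0 < s (E z - δ • v z))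
    (t : ((Fin d → ℝ) × (Fin d → ℝ)) → ℝ → ℝ)
    (ht : ∀ z ∈ 𝒵, ∀ δ ∈ rayDomain (E z, v z),
      HasDerivWithinAt (t (E z, v z)) (-(s (E z - δ • v z))⁻¹)
        (rayDomain (E z, v z)) δ)
    (φ : (Fin d → ℝ) → ℝ × ((Fin d → ℝ) × (Fin d → ℝ)))
    (hφ : ∀ z ∈ 𝒵, φ z = (t (E z, v z) (l1norm (E z - z)), (E z, v z))) :
    (∀ z ∈ 𝒵, StrictAntiOn (t (E z, v z)) (rayDomain (E z, v z))) ∧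
    Set.InjOn φ 𝒵 ∧
    (∀ z ∈ 𝒵, ∀ δ ∈ rayDomain (E z, v z),
      t (E z, v z) δ = (φ z).1 → E z - δ • v z = z) ∧
    (∀ z ∈ 𝒵, ∀ ℓ ∈ interior (t (E z, v z) '' rayDomain (E z, v z)),
      HasDerivAt
        (fun ℓ' => E z -
          (Function.invFunOn (t (E z, v z)) (rayDomain (E z, v z)) ℓ') • v z)
        (s (E z -
          (Function.invFunOn (t (E z, v z)) (rayDomain (E z, v z)) ℓ) • v z) • v z)
        ℓ) := by
  classical
  -- positivity of the ℓ¹-distance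
  have hδpos : ∀ z ∈ 𝒵, 0 < l1norm (E z - z) := by
    intro z hz
    have hne : E z - z ≠ 0 := sub_ne_zero.mpr (hE z hz).2
    have hne' : l1norm (E z - z) ≠ 0 := by
      intro h0
      apply hne
      funext j
      have := (Finset.sum_eq_zero_iff_of_nonneg
        (fun i _ => abs_nonneg ((E z - z) i))).mp h0 j (Finset.mem_univ j)
      simpa [abs_eq_zero] using this
    have hnn : 0 ≤ l1norm (E z - z) :=
      Finset.sum_nonneg fun i _ => abs_nonneg _
    exact lt_of_le_of_ne hnn (Ne.symm hne')
  -- the base point is recovered at δ = ‖E z − z‖₁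
  have hzeq : ∀ z ∈ 𝒵, E z - l1norm (E z - z) • v z = z := by
    intro z hz
    rw [hv z hz, smul_smul, mul_inv_cancel₀ (hδpos z hz).ne', one_smul,
      sub_sub_cancel]
  have hmem : ∀ z ∈ 𝒵, l1norm (E z - z) ∈ rayDomain (E z, v z) := by
    intro z hz
    refine ⟨hδpos z hz, ?_⟩
    show E z - l1norm (E z - z) • v z ∈ simplex d
    rw [hzeq z hz]
    exact h𝒵 hz
  -- part (i)
  have part1 : ∀ z ∈ 𝒵, StrictAntiOn (t (E z, v z)) (rayDomain (E z, v z)) := by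
    intro z hz
    apply strictAntiOn_of_deriv_neg (convex_rayDomain (E z, v z))
    · intro x hx
      exact (ht z hz x hx).continuousWithinAt
    · intro x hx
      have hx' : x ∈ rayDomain (E z, v z) := interior_subset hx
      have hd' := (ht z hz x hx').hasDerivAt (mem_interior_iff_mem_nhds.mp hx)
      rw [hd'.deriv]
      exact neg_lt_zero.mpr (inv_pos.mpr (hs z hz x hx'))
  -- part (ii)
  have part2 : Set.InjOn φ 𝒵 := by
    intro z₁ h₁ z₂ h₂ heq
    rw [hφ z₁ h₁, hφ z₂ h₂] at heq
    simp only [Prod.mk.injEq] at heq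
    obtain ⟨hteq, hE12, hv12⟩ := heq
    have hw : ((E z₁, v z₁) : (Fin d → ℝ) × (Fin d → ℝ)) = (E z₂, v z₂) := by
      rw [hE12, hv12]
    have hmem2 : l1norm (E z₂ - z₂) ∈ rayDomain (E z₁, v z₁) := by
      rw [hw]; exact hmem z₂ h₂
    have hteq' : t (E z₁, v z₁) (l1norm (E z₁ - z₁))
        = t (E z₁, v z₁) (l1norm (E z₂ - z₂)) := by
      conv_rhs => rw [hw]
      exact hteq
    have hδeq := (part1 z₁ h₁).injOn (hmem z₁ h₁) hmem2 hteq'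
    calc z₁ = E z₁ - l1norm (E z₁ - z₁) • v z₁ := (hzeq z₁ h₁).symm
      _ = E z₂ - l1norm (E z₂ - z₂) • v z₂ := by rw [hδeq, hE12, hv12]
      _ = z₂ := hzeq z₂ h₂
  -- part (iii)
  have part3 : ∀ z ∈ 𝒵, ∀ δ ∈ rayDomain (E z, v z),
      t (E z, v z) δ = (φ z).1 → E z - δ • v z = z := by
    intro z hz δ hδ hteq
    have hteq' : t (E z, v z) δ = t (E z, v z) (l1norm (E z - z)) := by
      rw [hteq, hφ z hz]
    have hδeq := (part1 z hz).injOn hδ (hmem z hz) hteq'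
    rw [hδeq]
    exact hzeq z hz
  refine ⟨part1, part2, part3, ?_⟩
  -- part (iv)
  intro z hz ℓ hℓ
  set D := rayDomain (E z, v z) with hDdef
  set f := t (E z, v z) with hfdef
  set g := Function.invFunOn f D with hgdef
  have hanti : StrictAntiOn f D := part1 z hz
  have hinj : Set.InjOn f D := hanti.injOn
  have hℓT : ℓ ∈ f '' D := interior_subset hℓ
  have hT : f '' D ∈ 𝓝 ℓ := mem_interior_iff_mem_nhds.mp hℓ
  have hgmem : ∀ ℓ' ∈ f '' D, g ℓ' ∈ D := by
    rintro ℓ' ⟨x, hx, rfl⟩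
    exact Function.invFunOn_mem ⟨x, hx, rfl⟩
  have hgeq : ∀ ℓ' ∈ f '' D, f (g ℓ') = ℓ' := by
    rintro ℓ' ⟨x, hx, rfl⟩
    exact Function.invFunOn_eq ⟨x, hx, rfl⟩
  set δ₀ := g ℓ with hδ₀def
  have hδ₀D : δ₀ ∈ D := hgmem ℓ hℓT
  have hfδ₀ : f δ₀ = ℓ := hgeq ℓ hℓT
  have hgimg : g '' (f '' D) = D := hinj.invFunOn_image Subset.rfl
  have hganti : StrictAntiOn g (f '' D) := by
    intro a ha b hb hab
    rcases lt_trichotomy (g b) (g a) with h | h | h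
    · exact h
    · have h2 : f (g b) = f (g a) := congrArg f h
      rw [hgeq a ha, hgeq b hb] at h2
      exact absurd h2 hab.ne'
    · have h2 := hanti (hgmem a ha) (hgmem b hb) h
      rw [hgeq a ha, hgeq b hb] at h2
      exact absurd hab (not_lt.mpr h2.le)
  -- a neighbourhood of δ₀ inside D
  obtain ⟨ε, hε, hball⟩ := Metric.mem_nhds_iff.mp hT
  have hl1 : ℓ - ε / 2 ∈ f '' D := by
    apply hball
    rw [Metric.mem_ball, Real.dist_eq,
      show ℓ - ε / 2 - ℓ = -(ε / 2) by ring, abs_neg,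
      abs_of_pos (by linarith)]
    linarith
  have hl2 : ℓ + ε / 2 ∈ f '' D := by
    apply hball
    rw [Metric.mem_ball, Real.dist_eq,
      show ℓ + ε / 2 - ℓ = ε / 2 by ring, abs_of_pos (by linarith)]
    linarith
  have h1 : g (ℓ + ε / 2) < δ₀ := hganti hℓT hl2 (by linarith)
  have h2 : δ₀ < g (ℓ - ε / 2) := hganti hl1 hℓT (by linarith)
  have hIccsub : Icc (g (ℓ + ε / 2)) (g (ℓ - ε / 2)) ⊆ D :=
    (convex_rayDomain (E z, v z)).ordConnected.out (hgmem _ hl2) (hgmem _ hl1)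
  -- continuity of g at ℓ
  have hgcont : ContinuousAt g ℓ := by
    have hmono : StrictMonoOn (fun x => -g x) (f '' D) :=
      fun a ha b hb hab => neg_lt_neg (hganti ha hb hab)
    have himg : (fun x => -g x) '' (f '' D) ∈ 𝓝 (-g ℓ) := by
      refine Filter.mem_of_superset
        (Ioo_mem_nhds (neg_lt_neg h2) (neg_lt_neg h1)) ?_
      rintro x ⟨hx1, hx2⟩
      have hx1' : -x < g (ℓ - ε / 2) := by linarith
      have hx2' : g (ℓ + ε / 2) < -x := by linarith
      have hxD : -x ∈ D := hIccsub ⟨hx2'.le, hx1'.le⟩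
      have hx' : -x ∈ g '' (f '' D) := by rw [hgimg]; exact hxD
      obtain ⟨y, hy, hy2⟩ := hx'
      exact ⟨y, hy, by show -g y = x; rw [hy2]; ring⟩
    have hcont := hmono.continuousAt_of_image_mem_nhds hT himg
    have : ContinuousAt (fun x => -(-g x)) ℓ := hcont.neg
    simpa using this
  -- derivative of g
  have hc : 0 < s (E z - δ₀ • v z) := hs z hz δ₀ hδ₀D
  set c := s (E z - δ₀ • v z) with hcdef
  have hft : HasDerivWithinAt f (-c⁻¹) D δ₀ := ht z hz δ₀ hδ₀D
  have hslope := hasDerivWithinAt_iff_tendsto_slope.mp hft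
  have hgt : Filter.Tendsto g (𝓝[≠] ℓ) (𝓝[D \ {δ₀}] δ₀) := by
    rw [tendsto_nhdsWithin_iff]
    constructor
    · exact hgcont.tendsto.mono_left nhdsWithin_le_nhds
    · filter_upwards [mem_nhdsWithin_of_mem_nhds hT, self_mem_nhdsWithin]
        with ℓ' hT' hne
      refine ⟨hgmem ℓ' hT', ?_⟩
      intro habs
      apply hne
      have : f (g ℓ') = f δ₀ := congrArg f habs
      rw [hgeq ℓ' hT', hfδ₀] at this
      simpa using this
  have hcomp : Filter.Tendsto (fun ℓ' => slope f δ₀ (g ℓ')) (𝓝[≠] ℓ)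
      (𝓝 (-c⁻¹)) := hslope.comp hgt
  have hne0 : (-c⁻¹ : ℝ) ≠ 0 := neg_ne_zero.mpr (inv_ne_zero hc.ne')
  have hinvt : Filter.Tendsto (fun ℓ' => (slope f δ₀ (g ℓ'))⁻¹) (𝓝[≠] ℓ)
      (𝓝 (-c)) := by
    have h' : ((-c⁻¹ : ℝ))⁻¹ = -c := by rw [inv_neg, inv_inv]
    exact h' ▸ hcomp.inv₀ hne0
  have hgd : HasDerivAt g (-c) ℓ := by
    rw [hasDerivAt_iff_tendsto_slope]
    apply hinvt.congr'
    filter_upwards [mem_nhdsWithin_of_mem_nhds hT] with ℓ' hT'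
    rw [slope_def_field, slope_def_field, hgeq ℓ' hT', hfδ₀, inv_div]
  have hfinal : HasDerivAt (fun ℓ' => E z - g ℓ' • v z) (c • v z) ℓ := by
    have hsm : HasDerivAt (fun ℓ' => g ℓ' • v z) ((-c) • v z) ℓ :=
      hgd.smul_const (v z)
    have hcs := hsm.const_sub (E z)
    simpa [neg_smul] using hcs
  exact hfinal
end

section
/- Let d ≥ 2 and let j ∈ {1, …, d}. Suppose β = (β^1, …, β^d) ∈ ℝ^d satisfies Σ_{k=1}^d β^k = 0 and μ ∈ ℝ, and define f on the open simplex {z ∈ (0,1)^d : Σ_k z^k = 1} by f(z) := Σ_{k=1}^d β^k log(z^k) + μ. Define the perturbation ψ(z, γ) := z + γ z^j (e_j − z). Then for every z in the open simplex, the one-sided derivative ∂_γ f(ψ(z, γ))|_{γ=0} exists and equals β^j. Consequently, if Z is a random vector in the open simplex and Y a real random variable with E[Y | Z = z] = f(z), then the compositional feature influence with multiplicative speed CFI^j_mult := E[∂_γ f(ψ(Z, γ))|_{γ=0}] equals β^j. -/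
open MeasureTheory

/-- The open probability simplex `{z ∈ (0,1)^d : Σ_k z^k = 1}`. -/
def openSimplex (d : ℕ) : Set (Fin d → ℝ) :=
  {z | (∀ k, z k ∈ Set.Ioo (0 : ℝ) 1) ∧ ∑ k, z k = 1}

/-- In a well-specified linear log-contrast model
`f(z) = Σ_k β^k log z^k + μ` with `Σ_k β^k = 0`, the derivative at `γ = 0` of
`γ ↦ f(ψ(z, γ))` along the multiplicative-speed perturbation
`ψ(z, γ) = z + γ z^j (e_j − z)` equals `β^j` for every `z` in the open simplex;
consequently `CFI^j_mult = E[∂_γ f(ψ(Z, γ))|_{γ=0}] = β^j`. -/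
theorem stmt3
    (d : ℕ) (hd : 2 ≤ d) (j : Fin d)
    (β : Fin d → ℝ) (hβ : ∑ k, β k = 0) (μ : ℝ)
    (f : (Fin d → ℝ) → ℝ)
    (hf : ∀ z, f z = ∑ k, β k * Real.log (z k) + μ)
    (ψ : (Fin d → ℝ) → ℝ → (Fin d → ℝ))
    (hψ : ∀ z γ, ψ z γ = z + (γ * z j) • (Pi.single j (1 : ℝ) - z))
    (Ω : Type*) [MeasurableSpace Ω] (P : Measure Ω) [IsProbabilityMeasure P]
    (Z : Ω → (Fin d → ℝ)) (hZm : Measurable Z) (hZ : ∀ a, Z a ∈ openSimplex d)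
    (Y : Ω → ℝ) (hY : Integrable Y P)
    (hcond : P[Y | MeasurableSpace.comap Z inferInstance] =ᵐ[P] fun a => f (Z a)) :
    (∀ z ∈ openSimplex d,
      HasDerivWithinAt (fun γ => f (ψ z γ)) (β j) (Set.Ici (0 : ℝ)) 0) ∧
    ∫ a, derivWithin (fun γ => f (ψ (Z a) γ)) (Set.Ici (0 : ℝ)) 0 ∂P = β j := by
  have key : ∀ z ∈ openSimplex d,
      HasDerivWithinAt (fun γ => f (ψ z γ)) (β j) (Set.Ici (0 : ℝ)) 0 := by
    intro z hz
    obtain ⟨hz01, hzsum⟩ := hz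
    have hzpos : ∀ k, 0 < z k := fun k => (hz01 k).1
    -- derivative of each coordinate term
    have hterm : ∀ k : Fin d, HasDerivAt
        (fun γ : ℝ => β k * Real.log (z k + (γ * z j) * ((Pi.single j (1:ℝ) : Fin d → ℝ) k - z k)))
        (β k * ((z j * ((Pi.single j (1:ℝ) : Fin d → ℝ) k - z k)) / z k)) 0 := by
      intro k
      have hg : HasDerivAt
          (fun γ : ℝ => z k + (γ * z j) * ((Pi.single j (1:ℝ) : Fin d → ℝ) k - z k))
          (z j * ((Pi.single j (1:ℝ) : Fin d → ℝ) k - z k)) 0 := by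
        have h1 : HasDerivAt (fun γ : ℝ => (γ * z j) * ((Pi.single j (1:ℝ) : Fin d → ℝ) k - z k))
            (z j * ((Pi.single j (1:ℝ) : Fin d → ℝ) k - z k)) 0 := by
          have := ((hasDerivAt_id (0:ℝ)).mul_const (z j)).mul_const
            ((Pi.single j (1:ℝ) : Fin d → ℝ) k - z k)
          simpa using this
        simpa using h1.const_add (z k)
      have hne : (z k + ((0:ℝ) * z j) * ((Pi.single j (1:ℝ) : Fin d → ℝ) k - z k)) ≠ 0 := by
        simpa using (hzpos k).ne'
      have := (hg.log hne)
      have h2 := this.const_mul (β k)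
      simpa [mul_div_assoc] using h2
    have hsum : HasDerivAt (fun γ : ℝ =>
        (∑ k, β k * Real.log (z k + (γ * z j) * ((Pi.single j (1:ℝ) : Fin d → ℝ) k - z k))) + μ)
        (∑ k, β k * ((z j * ((Pi.single j (1:ℝ) : Fin d → ℝ) k - z k)) / z k)) 0 := by
      exact (HasDerivAt.fun_sum (fun k _ => hterm k)).add_const μ
    have hval : (∑ k, β k * ((z j * ((Pi.single j (1:ℝ) : Fin d → ℝ) k - z k)) / z k)) = β j := by
      have heach : ∀ k : Fin d, β k * ((z j * ((Pi.single j (1:ℝ) : Fin d → ℝ) k - z k)) / z k)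
          = -(β k * z j) + (if k = j then β j else 0) := by
        intro k
        by_cases hkj : k = j
        · subst hkj
          simp only [Pi.single_eq_same, if_pos rfl]
          field_simp [(hzpos k).ne']
          rw [if_pos trivial]; ring
        · simp only [Pi.single_eq_of_ne hkj, if_neg hkj]
          have : (z j * ((0:ℝ) - z k)) / z k = -(z j) := by
            field_simp [(hzpos k).ne']
            ring
          rw [this]; ring
      rw [Finset.sum_congr rfl (fun k _ => heach k), Finset.sum_add_distrib]
      simp [Finset.sum_ite_eq', ← Finset.sum_mul, hβ]
    have heq : (fun γ : ℝ => f (ψ z γ)) = fun γ : ℝ =>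
        (∑ k, β k * Real.log (z k + (γ * z j) * ((Pi.single j (1:ℝ) : Fin d → ℝ) k - z k))) + μ := by
      funext γ
      rw [hf, hψ]
      simp [Pi.add_apply, Pi.smul_apply, Pi.sub_apply, smul_eq_mul]
    rw [heq]
    exact (hval ▸ hsum).hasDerivWithinAt
  refine ⟨key, ?_⟩
  have hconst : ∀ a, derivWithin (fun γ => f (ψ (Z a) γ)) (Set.Ici (0 : ℝ)) 0 = β j := by
    intro a
    exact (key (Z a) (hZ a)).derivWithin (uniqueDiffOn_Ici 0 0 Set.self_mem_Ici)
  simp only [hconst]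
  simp
end

section
/- Let d ≥ 2 and k ∈ {1, …, d}. Let z_* ∈ Δ^{d−1} := {z ∈ [0,1]^d : Σ_j z^j = 1} with z_*^k ≠ 1, let β ∈ ℝ^d satisfy Σ_{j=1}^d β^j z_*^j = 0 and μ ∈ ℝ, and define f : Δ^{d−1} → ℝ by f(z) := Σ_{j=1}^d β^j z^j + μ. Define the perturbation ψ_k componentwise by ψ_k^j(z, γ) := z^j + γ if j = k, and ψ_k^j(z, γ) := z^j − γ z_*^j/(1 − z_*^k) otherwise. Then for every z ∈ Δ^{d−1}, ∂_γ f(ψ_k(z, γ))|_{γ=0} = β^k/(1 − z_*^k). Consequently, for a random Z ∈ Δ^{d−1} and Y with E[Y | Z = z] = f(z), the average directional perturbation effect τ_{ψ_k} := E[∂_γ f(ψ_k(Z, γ))|_{γ=0}] equals β^k/(1 − z_*^k). -/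
open MeasureTheory

/-- Cox effects as average perturbation effects: in the linear model
`f(z) = Σ_j β^j z^j + μ` with identification constraint `Σ_j β^j z_*^j = 0`
relative to the standard mixture `z_*`, the derivative at `γ = 0` of
`γ ↦ f(ψ_k(z, γ))`, where `ψ_k` increases the `k`-th component while rescaling
the others towards `z_*`, equals `β^k/(1 − z_*^k)`; consequently
`τ_{ψ_k} = E[∂_γ f(ψ_k(Z, γ))|_{γ=0}] = β^k/(1 − z_*^k)`. -/
theorem stmt4
    (d : ℕ) (hd : 2 ≤ d) (k : Fin d)
    (zstar : Fin d → ℝ) (hzstar : zstar ∈ simplex d) (hzk : zstar k ≠ 1)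
    (β : Fin d → ℝ) (hβ : ∑ j, β j * zstar j = 0) (μ : ℝ)
    (f : (Fin d → ℝ) → ℝ) (hf : ∀ z, f z = ∑ j, β j * z j + μ)
    (ψ : (Fin d → ℝ) → ℝ → (Fin d → ℝ))
    (hψ : ∀ z γ j, ψ z γ j =
      if j = k then z j + γ else z j - γ * zstar j / (1 - zstar k))
    (Ω : Type*) [MeasurableSpace Ω] (P : Measure Ω) [IsProbabilityMeasure P]
    (Z : Ω → (Fin d → ℝ)) (hZm : Measurable Z) (hZ : ∀ a, Z a ∈ simplex d)
    (Y : Ω → ℝ) (hY : Integrable Y P)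
    (hcond : P[Y | MeasurableSpace.comap Z inferInstance] =ᵐ[P] fun a => f (Z a)) :
    (∀ z ∈ simplex d,
      HasDerivWithinAt (fun γ => f (ψ z γ)) (β k / (1 - zstar k))
        (Set.Ici (0 : ℝ)) 0) ∧
    ∫ a, derivWithin (fun γ => f (ψ (Z a) γ)) (Set.Ici (0 : ℝ)) 0 ∂P =
      β k / (1 - zstar k) := by
  have hne : (1 : ℝ) - zstar k ≠ 0 := sub_ne_zero.mpr (Ne.symm hzk)
  have key : ∀ z γ, f (ψ z γ) =
      (∑ j, β j * z j + μ) + γ * (β k / (1 - zstar k)) := by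
    intro z γ
    rw [hf]
    have hterm : ∀ j, β j * ψ z γ j =
        β j * z j - γ * (β j * zstar j) / (1 - zstar k) +
          (if j = k then γ * β k + γ * (β k * zstar k) / (1 - zstar k) else 0) := by
      intro j
      rw [hψ]
      split_ifs with h
      · subst h; field_simp; ring
      · ring
    rw [Finset.sum_congr rfl fun j _ => hterm j]
    rw [Finset.sum_add_distrib, Finset.sum_sub_distrib,
      Finset.sum_ite_eq' Finset.univ k
        (fun _ => γ * β k + γ * (β k * zstar k) / (1 - zstar k))]
    simp only [Finset.mem_univ, if_true]
    rw [show (∑ j, γ * (β j * zstar j) / (1 - zstar k)) =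
        (∑ j, β j * zstar j) * γ / (1 - zstar k) by
      rw [Finset.sum_mul, Finset.sum_div]
      exact Finset.sum_congr rfl fun j _ => by ring, hβ]
    field_simp
    ring
  have hderiv : ∀ z, HasDerivWithinAt (fun γ => f (ψ z γ)) (β k / (1 - zstar k))
      (Set.Ici (0 : ℝ)) 0 := by
    intro z
    have : HasDerivAt (fun γ : ℝ => (∑ j, β j * z j + μ) + γ * (β k / (1 - zstar k)))
        (β k / (1 - zstar k)) 0 := by
      simpa using ((hasDerivAt_id (0 : ℝ)).mul_const (β k / (1 - zstar k))).const_add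
        (∑ j, β j * z j + μ)
    have := this.hasDerivWithinAt (s := Set.Ici (0 : ℝ))
    simpa only [← key z] using this
  refine ⟨fun z _ => hderiv z, ?_⟩
  have hdw : ∀ a, derivWithin (fun γ => f (ψ (Z a) γ)) (Set.Ici (0 : ℝ)) 0 =
      β k / (1 - zstar k) := fun a =>
    (hderiv (Z a)).derivWithin (uniqueDiffOn_Ici 0 0 Set.self_mem_Ici)
  simp only [hdw]
  simp
end

section
/- Let (Y, L, W) be random variables taking values in ℝ × ℝ × 𝒲, where 𝒲 is a measurable space, with E[L²] < ∞ and E[Y²] < ∞, and assume E[var(L | W)] > 0. Define θ := E[cov(Y, L | W)] / E[var(L | W)] and h(W) := E[Y | W] − θ E[L | W]. Then (θ, h) solves the minimization problem min over θ′ ∈ ℝ and measurable h′ : 𝒲 → ℝ with E[h′(W)²] < ∞ of E[(E[Y | L, W] − θ′ L − h′(W))²]; that is, for all such (θ′, h′), E[(E[Y | L, W] − θ L − h(W))²] ≤ E[(E[Y | L, W] − θ′ L − h′(W))²]. -/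
open MeasureTheory

section Aux
variable {α : Type*} {m m0 : MeasurableSpace α} {μ : Measure α}

lemma aux_integrable_mul {m0 : MeasurableSpace α} {μ : Measure α} {f g : α → ℝ}
    (hf : MemLp f 2 μ) (hg : MemLp g 2 μ) :
    Integrable (fun x => f x * g x) μ := by
  have h : MemLp (g • f) 1 μ :=
    hf.smul hg (hpqr := ⟨by rw [inv_one]; exact ENNReal.inv_two_add_inv_two⟩)
  exact (memLp_one_iff_integrable.mp h).congr
    (Filter.Eventually.of_forall fun x => by simp [mul_comm])

lemma aux_memℒp_condexp [IsFiniteMeasure μ] (hm : m ≤ m0) {f : α → ℝ} (hf : MemLp f 2 μ) :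
    MemLp (μ[f|m]) 2 μ := by
  have hfi : Integrable f μ := hf.integrable one_le_two
  set F : Lp ℝ 2 μ := hf.toLp f with hF
  have hFf : (F : α → ℝ) =ᵐ[μ] f := hf.coeFn_toLp
  have hG : MemLp ((condExpL2 ℝ ℝ hm F : lpMeas ℝ ℝ m 2 μ) : α → ℝ) 2 μ := Lp.memLp _
  have heq : ((condExpL2 ℝ ℝ hm F : lpMeas ℝ ℝ m 2 μ) : α → ℝ) =ᵐ[μ] μ[f|m] := by
    refine ae_eq_condExp_of_forall_setIntegral_eq hm hfi
      (fun s _ hμs => integrableOn_condExpL2_of_measure_ne_top hm hμs.ne F)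
      (fun s hs hμs => ?_) (aestronglyMeasurable_condExpL2 hm F)
    rw [integral_condExpL2_eq hm F hs hμs.ne]
    exact setIntegral_congr_ae (hm s hs) (hFf.mono fun x hx _ => hx)
  exact hG.ae_eq heq

lemma aux_integral_mul_condexp [IsFiniteMeasure μ] (hm : m ≤ m0) {f g : α → ℝ}
    (hfm : StronglyMeasurable[m] f) (hf : MemLp f 2 μ) (hg : MemLp g 2 μ) :
    ∫ x, f x * (μ[g|m]) x ∂μ = ∫ x, f x * g x ∂μ := by
  have hgi : Integrable g μ := hg.integrable one_le_two
  have hfg : Integrable (f * g) μ := aux_integrable_mul hf hg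
  have h1 : μ[f * g|m] =ᵐ[μ] f * μ[g|m] := condExp_mul_of_stronglyMeasurable_left hfm hfg hgi
  calc ∫ x, f x * (μ[g|m]) x ∂μ = ∫ x, (μ[f * g|m]) x ∂μ := (integral_congr_ae h1).symm
    _ = ∫ x, (f * g) x ∂μ := integral_condExp hm
    _ = ∫ x, f x * g x ∂μ := rfl

lemma aux_pythagoras {m0 : MeasurableSpace α} {μ : Measure α} {R D : α → ℝ}
    (hR : MemLp R 2 μ) (hD : MemLp D 2 μ)
    (hDR : ∫ a, D a * R a ∂μ = 0) :
    ∫ a, R a ^ 2 ∂μ ≤ ∫ a, (R a - D a) ^ 2 ∂μ := by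
  have iR2 : Integrable (fun a => R a ^ 2) μ :=
    (memLp_two_iff_integrable_sq hR.aestronglyMeasurable).1 hR
  have iD2 : Integrable (fun a => D a ^ 2) μ :=
    (memLp_two_iff_integrable_sq hD.aestronglyMeasurable).1 hD
  have iDR : Integrable (fun a => D a * R a) μ := aux_integrable_mul hD hR
  have key : ∫ a, (R a - D a) ^ 2 ∂μ
      = ∫ a, R a ^ 2 ∂μ + ∫ a, D a ^ 2 ∂μ - 2 * ∫ a, D a * R a ∂μ := by
    have e : (fun a => (R a - D a) ^ 2) = fun a => R a ^ 2 + D a ^ 2 - 2 * (D a * R a) := by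
      funext a; ring
    rw [e, integral_sub (f := fun a => R a ^ 2 + D a ^ 2) (iR2.add iD2) (iDR.const_mul 2),
      integral_add iR2 iD2, integral_const_mul]
  have hD2nonneg : 0 ≤ ∫ a, D a ^ 2 ∂μ := integral_nonneg fun a => sq_nonneg _
  rw [key, hDR]
  linarith

end Aux

/-- The population partially linear (partialling-out) coefficient
`θ = E[cov(Y, L | W)]/E[var(L | W)]` together with
`h(W) = E[Y | W] − θ E[L | W]` is the best mean-square approximation of the
nonparametric regression `E[Y | L, W]` by functions of the form
`θ′ L + h′(W)`. -/
theorem stmt5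
    (Ω : Type*) [MeasurableSpace Ω] (P : Measure Ω) [IsProbabilityMeasure P]
    (𝒲 : Type*) [MeasurableSpace 𝒲]
    (Y L : Ω → ℝ) (W : Ω → 𝒲)
    (hYm : Measurable Y) (hLm : Measurable L) (hWm : Measurable W)
    (hY2 : Integrable (fun a => (Y a) ^ 2) P)
    (hL2 : Integrable (fun a => (L a) ^ 2) P)
    (mW : MeasurableSpace Ω) (hmW : mW = MeasurableSpace.comap W inferInstance)
    (mLW : MeasurableSpace Ω)
    (hmLW : mLW = MeasurableSpace.comap (fun a => (L a, W a)) inferInstance)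
    (hvar : 0 < ∫ a, (L a - (P[L | mW]) a) ^ 2 ∂P)
    (θ : ℝ)
    (hθ : θ = (∫ a, (Y a - (P[Y | mW]) a) * (L a - (P[L | mW]) a) ∂P) /
      (∫ a, (L a - (P[L | mW]) a) ^ 2 ∂P)) :
    ∀ θ' : ℝ, ∀ h' : 𝒲 → ℝ, Measurable h' →
      Integrable (fun a => (h' (W a)) ^ 2) P →
      ∫ a, ((P[Y | mLW]) a - θ * L a -
          ((P[Y | mW]) a - θ * (P[L | mW]) a)) ^ 2 ∂P ≤
      ∫ a, ((P[Y | mLW]) a - θ' * L a - h' (W a)) ^ 2 ∂P := by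
  intro θ' h' hh'm hh'2
  have hmW_le := hWm.comap_le
  rw [← hmW] at hmW_le
  have hmLW_le := (hLm.prodMk hWm).comap_le
  rw [← hmLW] at hmLW_le
  have hW_le_LW : mW ≤ mLW := by
    rw [hmW, hmLW]
    have h1 : MeasurableSpace.comap W (inferInstance : MeasurableSpace 𝒲)
        = MeasurableSpace.comap (fun a => (L a, W a))
            (MeasurableSpace.comap (Prod.snd : ℝ × 𝒲 → 𝒲) inferInstance) := by
      rw [MeasurableSpace.comap_comp]
      rfl
    rw [h1]
    exact MeasurableSpace.comap_mono measurable_snd.comap_le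
  have hY2' : MemLp Y 2 P := (memLp_two_iff_integrable_sq hYm.aestronglyMeasurable).2 hY2
  have hL2' : MemLp L 2 P := (memLp_two_iff_integrable_sq hLm.aestronglyMeasurable).2 hL2
  have hH2 : MemLp (fun a => h' (W a)) 2 P :=
    (memLp_two_iff_integrable_sq (hh'm.comp hWm).aestronglyMeasurable).2 hh'2
  have hHsm : StronglyMeasurable[mW] (fun a => h' (W a)) := by
    have hme : Measurable[mW] (fun a => h' (W a)) := by
      rw [hmW]; exact hh'm.comp (Measurable.of_comap_le le_rfl)
    exact hme.stronglyMeasurable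
  have hLsmLW : StronglyMeasurable[mLW] L := by
    have hme : Measurable[mLW] L := by
      rw [hmLW]
      exact measurable_fst.comp (Measurable.of_comap_le le_rfl)
    exact hme.stronglyMeasurable
  have hg2 : MemLp (P[Y|mLW]) 2 P := aux_memℒp_condexp (μ := P) hmLW_le hY2'
  have hcY2 : MemLp (P[Y|mW]) 2 P := aux_memℒp_condexp (μ := P) hmW_le hY2'
  have hcL2 : MemLp (P[L|mW]) 2 P := aux_memℒp_condexp (μ := P) hmW_le hL2'
  have hcYsm : StronglyMeasurable[mW] (P[Y|mW]) := stronglyMeasurable_condExp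
  have hcLsm : StronglyMeasurable[mW] (P[L|mW]) := stronglyMeasurable_condExp
  -- orthogonality against mW-measurable L² functions
  have hFR : ∀ F : Ω → ℝ, StronglyMeasurable[mW] F → MemLp F 2 P →
      ∫ a, F a * ((P[Y|mLW]) a - θ * L a - ((P[Y|mW]) a - θ * (P[L|mW]) a)) ∂P = 0 := by
    intro F hFsm hF2
    have iFg : Integrable (fun a => F a * (P[Y|mLW]) a) P := aux_integrable_mul hF2 hg2
    have iFL : Integrable (fun a => F a * L a) P := aux_integrable_mul hF2 hL2'
    have iFcY : Integrable (fun a => F a * (P[Y|mW]) a) P := aux_integrable_mul hF2 hcY2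
    have iFcL : Integrable (fun a => F a * (P[L|mW]) a) P := aux_integrable_mul hF2 hcL2
    have e1 : ∫ a, F a * (P[Y|mLW]) a ∂P = ∫ a, F a * Y a ∂P :=
      aux_integral_mul_condexp (μ := P) hmLW_le (hFsm.mono hW_le_LW) hF2 hY2'
    have e2 : ∫ a, F a * (P[Y|mW]) a ∂P = ∫ a, F a * Y a ∂P :=
      aux_integral_mul_condexp (μ := P) hmW_le hFsm hF2 hY2'
    have e3 : ∫ a, F a * (P[L|mW]) a ∂P = ∫ a, F a * L a ∂P :=
      aux_integral_mul_condexp (μ := P) hmW_le hFsm hF2 hL2'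
    have e : (fun a => F a * ((P[Y|mLW]) a - θ * L a - ((P[Y|mW]) a - θ * (P[L|mW]) a)))
        = fun a => (F a * (P[Y|mLW]) a - θ * (F a * L a))
            - (F a * (P[Y|mW]) a - θ * (F a * (P[L|mW]) a)) := by
      funext a; ring
    rw [e,
      integral_sub (f := fun a => F a * (P[Y|mLW]) a - θ * (F a * L a))
        (g := fun a => F a * (P[Y|mW]) a - θ * (F a * (P[L|mW]) a))
        (iFg.sub (iFL.const_mul θ)) (iFcY.sub (iFcL.const_mul θ)),
      integral_sub (f := fun a => F a * (P[Y|mLW]) a) iFg (iFL.const_mul θ),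
      integral_sub (f := fun a => F a * (P[Y|mW]) a) iFcY (iFcL.const_mul θ),
      integral_const_mul, integral_const_mul, e1, e2, e3]
    ring
  -- orthogonality against L
  have hLR : ∫ a, L a * ((P[Y|mLW]) a - θ * L a - ((P[Y|mW]) a - θ * (P[L|mW]) a)) ∂P = 0 := by
    have iLg : Integrable (fun a => L a * (P[Y|mLW]) a) P := aux_integrable_mul hL2' hg2
    have iLL : Integrable (fun a => L a * L a) P := aux_integrable_mul hL2' hL2'
    have iLcY : Integrable (fun a => L a * (P[Y|mW]) a) P := aux_integrable_mul hL2' hcY2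
    have iLcL : Integrable (fun a => L a * (P[L|mW]) a) P := aux_integrable_mul hL2' hcL2
    have iYL : Integrable (fun a => Y a * L a) P := aux_integrable_mul hY2' hL2'
    have icLY : Integrable (fun a => (P[L|mW]) a * Y a) P := aux_integrable_mul hcL2 hY2'
    have icYL : Integrable (fun a => (P[Y|mW]) a * L a) P := aux_integrable_mul hcY2 hL2'
    have icYcL : Integrable (fun a => (P[Y|mW]) a * (P[L|mW]) a) P :=
      aux_integrable_mul hcY2 hcL2
    have icLL : Integrable (fun a => (P[L|mW]) a * L a) P := aux_integrable_mul hcL2 hL2'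
    have icLcL : Integrable (fun a => (P[L|mW]) a * (P[L|mW]) a) P :=
      aux_integrable_mul hcL2 hcL2
    have e1 : ∫ a, L a * (P[Y|mLW]) a ∂P = ∫ a, L a * Y a ∂P :=
      aux_integral_mul_condexp (μ := P) hmLW_le hLsmLW hL2' hY2'
    have e5 : ∫ a, (P[Y|mW]) a * (P[L|mW]) a ∂P = ∫ a, (P[Y|mW]) a * L a ∂P :=
      aux_integral_mul_condexp (μ := P) hmW_le hcYsm hcY2 hL2'
    have e6 : ∫ a, (P[L|mW]) a * (P[L|mW]) a ∂P = ∫ a, (P[L|mW]) a * L a ∂P :=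
      aux_integral_mul_condexp (μ := P) hmW_le hcLsm hcL2 hL2'
    have e7 : ∫ a, (P[L|mW]) a * (P[Y|mW]) a ∂P = ∫ a, (P[L|mW]) a * Y a ∂P :=
      aux_integral_mul_condexp (μ := P) hmW_le hcLsm hcL2 hY2'
    have c0 : ∫ a, L a * Y a ∂P = ∫ a, Y a * L a ∂P :=
      integral_congr_ae (Filter.Eventually.of_forall fun a => mul_comm _ _)
    have c1 : ∫ a, L a * (P[Y|mW]) a ∂P = ∫ a, (P[Y|mW]) a * L a ∂P :=
      integral_congr_ae (Filter.Eventually.of_forall fun a => mul_comm _ _)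
    have c2 : ∫ a, L a * (P[L|mW]) a ∂P = ∫ a, (P[L|mW]) a * L a ∂P :=
      integral_congr_ae (Filter.Eventually.of_forall fun a => mul_comm _ _)
    have c3 : ∫ a, (P[L|mW]) a * (P[Y|mW]) a ∂P = ∫ a, (P[Y|mW]) a * (P[L|mW]) a ∂P :=
      integral_congr_ae (Filter.Eventually.of_forall fun a => mul_comm _ _)
    -- variance expansion
    have hV : ∫ a, (L a - (P[L|mW]) a) ^ 2 ∂P
        = ∫ a, L a * L a ∂P - ∫ a, (P[L|mW]) a * (P[L|mW]) a ∂P := by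
      have e : (fun a => (L a - (P[L|mW]) a) ^ 2)
          = fun a => (L a * L a - (P[L|mW]) a * L a)
              - ((P[L|mW]) a * L a - (P[L|mW]) a * (P[L|mW]) a) := by
        funext a; ring
      rw [e,
        integral_sub (f := fun a => L a * L a - (P[L|mW]) a * L a)
          (g := fun a => (P[L|mW]) a * L a - (P[L|mW]) a * (P[L|mW]) a)
          (iLL.sub icLL) (icLL.sub icLcL),
        integral_sub (f := fun a => L a * L a) iLL icLL,
        integral_sub (f := fun a => (P[L|mW]) a * L a) icLL icLcL, ← e6]
      ring
    -- covariance expansion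
    have hC : ∫ a, (Y a - (P[Y|mW]) a) * (L a - (P[L|mW]) a) ∂P
        = ∫ a, Y a * L a ∂P - ∫ a, (P[Y|mW]) a * (P[L|mW]) a ∂P := by
      have e : (fun a => (Y a - (P[Y|mW]) a) * (L a - (P[L|mW]) a))
          = fun a => (Y a * L a - (P[L|mW]) a * Y a)
              - ((P[Y|mW]) a * L a - (P[Y|mW]) a * (P[L|mW]) a) := by
        funext a; ring
      rw [e,
        integral_sub (f := fun a => Y a * L a - (P[L|mW]) a * Y a)
          (g := fun a => (P[Y|mW]) a * L a - (P[Y|mW]) a * (P[L|mW]) a)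
          (iYL.sub icLY) (icYL.sub icYcL),
        integral_sub (f := fun a => Y a * L a) iYL icLY,
        integral_sub (f := fun a => (P[Y|mW]) a * L a) icYL icYcL,
        ← e7, ← e5, c3]
      ring
    have hVne : (∫ a, (L a - (P[L|mW]) a) ^ 2 ∂P) ≠ 0 := ne_of_gt hvar
    have hθV : θ * ∫ a, (L a - (P[L|mW]) a) ^ 2 ∂P
        = ∫ a, (Y a - (P[Y|mW]) a) * (L a - (P[L|mW]) a) ∂P := by
      rw [hθ, div_mul_cancel₀ _ hVne]
    rw [hV, hC] at hθV
    have e : (fun a => L a * ((P[Y|mLW]) a - θ * L a - ((P[Y|mW]) a - θ * (P[L|mW]) a)))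
        = fun a => (L a * (P[Y|mLW]) a - θ * (L a * L a))
            - (L a * (P[Y|mW]) a - θ * (L a * (P[L|mW]) a)) := by
      funext a; ring
    rw [e,
      integral_sub (f := fun a => L a * (P[Y|mLW]) a - θ * (L a * L a))
        (g := fun a => L a * (P[Y|mW]) a - θ * (L a * (P[L|mW]) a))
        (iLg.sub (iLL.const_mul θ)) (iLcY.sub (iLcL.const_mul θ)),
      integral_sub (f := fun a => L a * (P[Y|mLW]) a) iLg (iLL.const_mul θ),
      integral_sub (f := fun a => L a * (P[Y|mW]) a) iLcY (iLcL.const_mul θ),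
      integral_const_mul, integral_const_mul, e1, c0, c1, c2, ← e5, ← e6]
    linarith
  -- assemble
  have hR2 : MemLp (fun a => (P[Y|mLW]) a - θ * L a - ((P[Y|mW]) a - θ * (P[L|mW]) a)) 2 P :=
    (hg2.sub (hL2'.const_mul θ)).sub (hcY2.sub (hcL2.const_mul θ))
  have hF2 : MemLp (fun a => h' (W a) - ((P[Y|mW]) a - θ * (P[L|mW]) a)) 2 P :=
    hH2.sub (hcY2.sub (hcL2.const_mul θ))
  have hFsm : StronglyMeasurable[mW]
      (fun a => h' (W a) - ((P[Y|mW]) a - θ * (P[L|mW]) a)) :=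
    hHsm.sub (hcYsm.sub (stronglyMeasurable_const.mul hcLsm))
  have hD2 : MemLp (fun a => (θ' - θ) * L a
      + (h' (W a) - ((P[Y|mW]) a - θ * (P[L|mW]) a))) 2 P :=
    (hL2'.const_mul _).add hF2
  have hDR : ∫ a, ((θ' - θ) * L a + (h' (W a) - ((P[Y|mW]) a - θ * (P[L|mW]) a)))
      * ((P[Y|mLW]) a - θ * L a - ((P[Y|mW]) a - θ * (P[L|mW]) a)) ∂P = 0 := by
    have iLR : Integrable (fun a => L a *
        ((P[Y|mLW]) a - θ * L a - ((P[Y|mW]) a - θ * (P[L|mW]) a))) P :=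
      aux_integrable_mul hL2' hR2
    have iFR : Integrable (fun a => (h' (W a) - ((P[Y|mW]) a - θ * (P[L|mW]) a)) *
        ((P[Y|mLW]) a - θ * L a - ((P[Y|mW]) a - θ * (P[L|mW]) a))) P :=
      aux_integrable_mul hF2 hR2
    have e : (fun a => ((θ' - θ) * L a + (h' (W a) - ((P[Y|mW]) a - θ * (P[L|mW]) a)))
          * ((P[Y|mLW]) a - θ * L a - ((P[Y|mW]) a - θ * (P[L|mW]) a)))
        = fun a => (θ' - θ) * (L a *
            ((P[Y|mLW]) a - θ * L a - ((P[Y|mW]) a - θ * (P[L|mW]) a)))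
          + (h' (W a) - ((P[Y|mW]) a - θ * (P[L|mW]) a)) *
            ((P[Y|mLW]) a - θ * L a - ((P[Y|mW]) a - θ * (P[L|mW]) a)) := by
      funext a; ring
    rw [e,
      integral_add (iLR.const_mul (θ' - θ)) iFR, integral_const_mul, hLR,
      hFR _ hFsm hF2]
    ring
  have main := aux_pythagoras hR2 hD2 hDR
  refine le_of_le_of_eq main (integral_congr_ae (Filter.Eventually.of_forall fun a => ?_))
  ring
end

section
/- Let 𝒫 index a family of distributions of a real random variable X with sup_{P∈𝒫} E_P[|X|] ≤ C < ∞, and let (X_n)_{n∈ℕ} be i.i.d. copies of X. Let K ∈ ℕ and δ ∈ [0, 1). For each n, let I_1^{(n)}, …, I_K^{(n)} be a partition of {1, …, n} with N_k := |I_k^{(n)}| satisfying ⌊n/K⌋ ≤ N_k ≤ ⌈n/K⌉ for all k. Suppose there are random variables Y_1^{(n)}, …, Y_K^{(n)} such that for every k ∈ {1, …, K}, Y_k^{(n)} = N_k^{-1} Σ_{i ∈ I_k^{(n)}} X_i + o_𝒫(N_k^{-δ}). Then K^{-1} Σ_{k=1}^K Y_k^{(n)} = n^{-1} Σ_{i=1}^n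 X_i + o_𝒫(n^{-δ}). -/
open MeasureTheory Filter ProbabilityTheory

/-- `X_n = o_𝒫(a_n)`: for every `ε > 0`, `sup_{P ∈ 𝒫} P(|X_n| ≥ a_n ε) → 0`. -/
def littleOP {Ω ι : Type*} [MeasurableSpace Ω] (P : ι → Measure Ω)
    (X : ℕ → Ω → ℝ) (a : ℕ → ℝ) : Prop :=
  ∀ ε : ℝ, 0 < ε →
    Tendsto (fun n => ⨆ i, P i {ω | a n * ε ≤ |X n ω|}) atTop (nhds 0)

section crossfitHelpers

variable {Ω ι : Type*} [MeasurableSpace Ω] {P : ι → Measure Ω} {a b : ℕ → ℝ}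

lemma littleOP_congr {Z W : ℕ → Ω → ℝ} (h : ∀ n ω, Z n ω = W n ω)
    (hZ : littleOP P Z a) : littleOP P W a := by
  intro ε hε
  have := hZ ε hε
  simpa only [h] using this

lemma littleOP_zero_fun (ha : ∀ᶠ n in atTop, 0 < a n) :
    littleOP P (fun _ _ => (0 : ℝ)) a := by
  intro ε hε
  refine Tendsto.congr' ?_ (tendsto_const_nhds (x := (0 : ENNReal)))
  filter_upwards [ha] with n hn
  have h0 : {ω : Ω | a n * ε ≤ |(0:ℝ)|} = ∅ := by
    ext ω; simp only [abs_zero, Set.mem_setOf_eq, Set.mem_empty_iff_false, iff_false, not_le]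
    positivity
  simp only [abs_zero] at h0 ⊢
  rw [h0]
  simp

lemma littleOP.add {Z W : ℕ → Ω → ℝ}
    (hZ : littleOP P Z a) (hW : littleOP P W a) :
    littleOP P (fun n ω => Z n ω + W n ω) a := by
  intro ε hε
  have h2 : (0:ℝ) < ε / 2 := by positivity
  have hZ' := hZ (ε/2) h2
  have hW' := hW (ε/2) h2
  have hle : ∀ n, (⨆ i, P i {ω | a n * ε ≤ |Z n ω + W n ω|}) ≤
      (⨆ i, P i {ω | a n * (ε/2) ≤ |Z n ω|}) + (⨆ i, P i {ω | a n * (ε/2) ≤ |W n ω|}) := by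
    intro n
    refine iSup_le fun i => ?_
    have hsub : {ω | a n * ε ≤ |Z n ω + W n ω|} ⊆
        {ω | a n * (ε/2) ≤ |Z n ω|} ∪ {ω | a n * (ε/2) ≤ |W n ω|} := by
      intro ω hω
      by_contra hc
      simp only [Set.mem_union, Set.mem_setOf_eq, not_or, not_le] at hc
      have : |Z n ω + W n ω| < a n * ε := by
        calc |Z n ω + W n ω| ≤ |Z n ω| + |W n ω| := abs_add_le _ _
          _ < a n * (ε/2) + a n * (ε/2) := add_lt_add hc.1 hc.2
          _ = a n * ε := by ring
      exact absurd hω (not_le.mpr this)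
    calc P i {ω | a n * ε ≤ |Z n ω + W n ω|}
        ≤ P i ({ω | a n * (ε/2) ≤ |Z n ω|} ∪ {ω | a n * (ε/2) ≤ |W n ω|}) :=
          measure_mono hsub
      _ ≤ P i {ω | a n * (ε/2) ≤ |Z n ω|} + P i {ω | a n * (ε/2) ≤ |W n ω|} :=
          measure_union_le _ _
      _ ≤ _ := add_le_add (le_iSup (fun i => P i {ω | a n * (ε/2) ≤ |Z n ω|}) i)
          (le_iSup (fun i => P i {ω | a n * (ε/2) ≤ |W n ω|}) i)
  have hadd : Tendsto (fun n => (⨆ i, P i {ω | a n * (ε/2) ≤ |Z n ω|})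
      + (⨆ i, P i {ω | a n * (ε/2) ≤ |W n ω|})) atTop (nhds 0) := by
    have := hZ'.add hW'
    simpa using this
  exact tendsto_of_tendsto_of_tendsto_of_le_of_le tendsto_const_nhds hadd
    (fun n => zero_le) hle

lemma littleOP.finsetSum {κ : Type*} (s : Finset κ) (Z : κ → ℕ → Ω → ℝ)
    (ha : ∀ᶠ n in atTop, 0 < a n)
    (hZ : ∀ k ∈ s, littleOP P (Z k) a) :
    littleOP P (fun n ω => ∑ k ∈ s, Z k n ω) a := by
  classical
  induction s using Finset.induction with
  | empty => simpa using littleOP_zero_fun ha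
  | @insert k s hk ih =>
    have h1 : littleOP P (fun n ω => Z k n ω + ∑ j ∈ s, Z j n ω) a :=
      (hZ k (Finset.mem_insert_self k s)).add
        (ih fun j hj => hZ j (Finset.mem_insert_of_mem hj))
    exact littleOP_congr (fun n ω => by rw [Finset.sum_insert hk]) h1

lemma littleOP.of_subset {Z W : ℕ → Ω → ℝ}
    (h : littleOP P Z a) (c : ℝ) (hc : 0 < c)
    (hsub : ∀ ε : ℝ, 0 < ε → ∀ᶠ n in atTop, ∀ ω : Ω,
      b n * ε ≤ |W n ω| → a n * (c * ε) ≤ |Z n ω|) :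
    littleOP P W b := by
  intro ε hε
  have h' := h (c * ε) (by positivity)
  refine tendsto_of_tendsto_of_tendsto_of_le_of_le' tendsto_const_nhds h'
    (Eventually.of_forall fun n => zero_le) ?_
  filter_upwards [hsub ε hε] with n hn
  exact iSup_mono fun i => measure_mono fun ω hω => hn ω hω

end crossfitHelpers

/-- Cross-fitting lemma: fold-wise estimates `Y_k^{(n)}` that are each accurate to
order `N_k^{-δ}` on their fold combine into an estimate accurate to order `n^{-δ}`
on the full sample, uniformly over the family `𝒫`. -/
theorem stmt7 {Ω ι : Type*} [MeasurableSpace Ω] (P : ι → Measure Ω)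
    (hP : ∀ i, IsProbabilityMeasure (P i))
    (X : ℕ → Ω → ℝ) (C : ℝ)
    (hiid : ∀ i, iIndepFun X (P i))
    (hident : ∀ i n, IdentDistrib (X n) (X 0) (P i) (P i))
    (hint : ∀ i, Integrable (X 0) (P i))
    (hmom : ∀ i, ∫ ω, |X 0 ω| ∂(P i) ≤ C)
    (K : ℕ) (hK : 0 < K) (δ : ℝ) (hδ0 : 0 ≤ δ) (hδ1 : δ < 1)
    (I : ℕ → Fin K → Finset ℕ)
    (hdisj : ∀ n, ∀ k k' : Fin K, k ≠ k' → Disjoint (I n k) (I n k'))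
    (hcover : ∀ n, Finset.univ.biUnion (I n) = Finset.range n)
    (hcard : ∀ n k, n / K ≤ (I n k).card ∧ (I n k).card ≤ (n + K - 1) / K)
    (Y : ℕ → Fin K → Ω → ℝ)
    (hY : ∀ k : Fin K, littleOP P
      (fun n ω => Y n k ω - ((I n k).card : ℝ)⁻¹ * ∑ i ∈ I n k, X i ω)
      (fun n => ((I n k).card : ℝ) ^ (-δ))) :
    littleOP P
      (fun n ω => (K : ℝ)⁻¹ * ∑ k, Y n k ω - (n : ℝ)⁻¹ * ∑ i ∈ Finset.range n, X i ω)
      (fun n => (n : ℝ) ^ (-δ)) := by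
  have hKR : (0:ℝ) < K := by exact_mod_cast hK
  -- basic combinatorial facts about the fold sizes
  have hNfacts : ∀ n, 2 * K ≤ n → ∀ k : Fin K,
      0 < (I n k).card ∧ ((n:ℝ) ≤ 2 * K * ((I n k).card : ℝ)) ∧
        |(n:ℝ) - K * ((I n k).card : ℝ)| ≤ K := by
    intro n hn k
    obtain ⟨hlo, hhi⟩ := hcard n k
    have hdm : K * (n / K) + n % K = n := Nat.div_add_mod n K
    have hmod : n % K < K := Nat.mod_lt _ hK
    have h1 : K * (n / K) ≤ K * (I n k).card := Nat.mul_le_mul_left K hlo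
    have h2 : K * ((n + K - 1) / K) ≤ n + K - 1 := Nat.mul_div_le _ _
    have h3 : K * (I n k).card ≤ K * ((n + K - 1) / K) := Nat.mul_le_mul_left K hhi
    have h4 : 2 ≤ n / K := (Nat.le_div_iff_mul_le hK).mpr (by omega)
    have hcpos : 0 < (I n k).card := lt_of_lt_of_le (by omega : 0 < n / K) hlo
    have hK1 : K ≤ K * (I n k).card := Nat.le_mul_of_pos_right K hcpos
    have ha : n ≤ K * (I n k).card + K := by
      calc n = K * (n / K) + n % K := hdm.symm
        _ ≤ K * (I n k).card + K := Nat.add_le_add h1 hmod.le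
    have hb : K * (I n k).card ≤ n + K := by
      calc K * (I n k).card ≤ K * ((n + K - 1) / K) := h3
        _ ≤ n + K - 1 := h2
        _ ≤ n + K := by omega
    have hcR : (n:ℝ) ≤ (K:ℝ) * ((I n k).card : ℝ) + K := by exact_mod_cast ha
    have hbR : (K:ℝ) * ((I n k).card : ℝ) ≤ (n:ℝ) + K := by exact_mod_cast hb
    have hK1R : (K:ℝ) ≤ (K:ℝ) * ((I n k).card : ℝ) := by exact_mod_cast hK1
    refine ⟨hcpos, by nlinarith, ?_⟩
    rw [abs_le]
    constructor <;> linarith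
  -- eventual positivity of the target rate
  have hK1R : (1:ℝ) ≤ (K:ℝ) := by exact_mod_cast hK
  have hapos : ∀ᶠ n : ℕ in atTop, (0:ℝ) < (n:ℝ) ^ (-δ) := by
    filter_upwards [eventually_ge_atTop 1] with n hn
    have : (0:ℝ) < (n:ℝ) := by exact_mod_cast lt_of_lt_of_le Nat.zero_lt_one hn
    exact Real.rpow_pos_of_pos this _
  -- the error terms, rescaled to the global rate
  have hA : ∀ k : Fin K, littleOP P
      (fun n ω => (K:ℝ)⁻¹ * (Y n k ω - ((I n k).card : ℝ)⁻¹ * ∑ i ∈ I n k, X i ω))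
      (fun n => (n:ℝ) ^ (-δ)) := by
    intro k
    refine (hY k).of_subset (1/2) one_half_pos ?_
    intro ε hε
    filter_upwards [eventually_ge_atTop (2 * K), eventually_ge_atTop 1] with n hn hn1 ω hω
    obtain ⟨hcpos, hc2, _⟩ := hNfacts n hn k
    set N : ℝ := ((I n k).card : ℝ) with hNdef
    have hNpos : (0:ℝ) < N := by rw [hNdef]; exact_mod_cast hcpos
    have hnpos : (0:ℝ) < n := by exact_mod_cast lt_of_lt_of_le Nat.zero_lt_one hn1
    have hrpow_pos : (0:ℝ) < (n:ℝ) ^ (-δ) := Real.rpow_pos_of_pos hnpos _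
    have habs : |(K:ℝ)⁻¹ * (Y n k ω - N⁻¹ * ∑ i ∈ I n k, X i ω)|
        = (K:ℝ)⁻¹ * |Y n k ω - N⁻¹ * ∑ i ∈ I n k, X i ω| := by
      rw [abs_mul, abs_of_pos (inv_pos.mpr hKR)]
    have hE : (K:ℝ) * ((n:ℝ)^(-δ) * ε) ≤ |Y n k ω - N⁻¹ * ∑ i ∈ I n k, X i ω| := by
      have h5 := mul_le_mul_of_nonneg_left hω (le_of_lt hKR)
      rw [habs] at h5
      calc (K:ℝ) * ((n:ℝ)^(-δ) * ε)
          ≤ (K:ℝ) * ((K:ℝ)⁻¹ * |Y n k ω - N⁻¹ * ∑ i ∈ I n k, X i ω|) := h5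
        _ = |Y n k ω - N⁻¹ * ∑ i ∈ I n k, X i ω| := by field_simp
    have hNle : N ^ (-δ) ≤ 2 * K * (n:ℝ) ^ (-δ) := by
      have hq1 : (n:ℝ) / (2 * K) ≤ N := by
        rw [div_le_iff₀ (by positivity)]
        nlinarith
      have hq2 : N ^ (-δ) ≤ ((n:ℝ) / (2 * K)) ^ (-δ) :=
        Real.rpow_le_rpow_of_nonpos (by positivity) hq1 (neg_nonpos.mpr hδ0)
      have hq3 : ((n:ℝ) / (2 * K)) ^ (-δ) = (n:ℝ) ^ (-δ) * (2 * (K:ℝ)) ^ δ := by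
        rw [Real.div_rpow (le_of_lt hnpos) (by positivity),
          Real.rpow_neg (by positivity : (0:ℝ) ≤ 2 * (K:ℝ)) δ, division_def, inv_inv]
      have hq4 : (2 * (K:ℝ)) ^ δ ≤ 2 * K := by
        calc (2 * (K:ℝ)) ^ δ ≤ (2 * (K:ℝ)) ^ (1:ℝ) :=
              Real.rpow_le_rpow_of_exponent_le (by linarith) hδ1.le
          _ = 2 * K := Real.rpow_one _
      calc N ^ (-δ) ≤ (n:ℝ) ^ (-δ) * (2 * (K:ℝ)) ^ δ := hq2.trans_eq hq3
        _ ≤ (n:ℝ) ^ (-δ) * (2 * K) := mul_le_mul_of_nonneg_left hq4 hrpow_pos.le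
        _ = 2 * K * (n:ℝ) ^ (-δ) := mul_comm _ _
    calc N ^ (-δ) * (1/2 * ε) ≤ (2 * K * (n:ℝ) ^ (-δ)) * (1/2 * ε) :=
          mul_le_mul_of_nonneg_right hNle (by positivity)
      _ = (K:ℝ) * ((n:ℝ)^(-δ) * ε) := by ring
      _ ≤ _ := hE
  -- the averaging-mismatch terms
  have hB : ∀ k : Fin K, littleOP P
      (fun n ω => ((K:ℝ)⁻¹ * (((I n k).card : ℝ))⁻¹ - (n:ℝ)⁻¹) * ∑ i ∈ I n k, X i ω)
      (fun n => (n : ℝ) ^ (-δ)) := by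
    intro k
    intro ε hε
    have hdom : Tendsto (fun n : ℕ => ENNReal.ofReal (C / ε * (n:ℝ) ^ (δ - 1)))
        atTop (nhds 0) := by
      have h1 : Tendsto (fun n : ℕ => ((n:ℝ)) ^ (δ - 1)) atTop (nhds 0) := by
        have := (tendsto_rpow_neg_atTop (by linarith : (0:ℝ) < 1 - δ)).comp
          (tendsto_natCast_atTop_atTop (R := ℝ))
        simpa [Function.comp_def, neg_sub] using this
      have h2 : Tendsto (fun n : ℕ => C / ε * ((n:ℝ)) ^ (δ - 1)) atTop (nhds 0) := by
        simpa using h1.const_mul (C / ε)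
      have := (ENNReal.continuous_ofReal.tendsto 0).comp h2
      simpa [Function.comp_def] using this
    refine tendsto_of_tendsto_of_tendsto_of_le_of_le' tendsto_const_nhds hdom
      (Eventually.of_forall fun n => zero_le) ?_
    filter_upwards [eventually_ge_atTop (2 * K), eventually_ge_atTop 1] with n hn hn1
    obtain ⟨hcpos, hc2, hc3⟩ := hNfacts n hn k
    set N : ℝ := ((I n k).card : ℝ) with hNdef
    have hNpos : (0:ℝ) < N := by rw [hNdef]; exact_mod_cast hcpos
    have hnpos : (0:ℝ) < n := by exact_mod_cast lt_of_lt_of_le Nat.zero_lt_one hn1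
    set coef : ℝ := (K:ℝ)⁻¹ * N⁻¹ - (n:ℝ)⁻¹ with hcoefdef
    have hcoef_eq : coef = ((n:ℝ) - K * N) / (K * N * n) := by
      rw [hcoefdef]
      field_simp
    have hcoef_abs : |coef| ≤ (N * n)⁻¹ := by
      rw [hcoef_eq, abs_div, abs_of_pos (by positivity : (0:ℝ) < K * N * n)]
      rw [div_le_iff₀ (by positivity : (0:ℝ) < K * N * n)]
      calc |(n:ℝ) - K * N| ≤ K := hc3
        _ = (N * n)⁻¹ * (K * N * n) := by field_simp
    set t : ℝ := (n:ℝ) ^ (-δ) * ε with htdef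
    have htpos : 0 < t := by
      have := Real.rpow_pos_of_pos hnpos (-δ)
      positivity
    refine iSup_le fun i => ?_
    haveI := hP i
    have hXint : ∀ j, Integrable (X j) (P i) := fun j =>
      ((hident i j).integrable_iff).mpr (hint i)
    have hgint : Integrable (fun ω => ∑ j ∈ I n k, |X j ω|) (P i) :=
      integrable_finset_sum _ fun j _ => (hXint j).abs
    have hfint : Integrable (fun ω => |coef| * ∑ j ∈ I n k, |X j ω|) (P i) :=
      hgint.const_mul _
    have hmean : ∀ j, ∫ ω, |X j ω| ∂(P i) ≤ C := fun j => by
      have heq := ((hident i j).comp measurable_abs).integral_eq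
      calc ∫ ω, |X j ω| ∂(P i) = ∫ ω, |X 0 ω| ∂(P i) := heq
        _ ≤ C := hmom i
    have hintegral : ∫ ω, |coef| * ∑ j ∈ I n k, |X j ω| ∂(P i) ≤ C / n := by
      rw [integral_const_mul]
      have h1 : ∫ ω, ∑ j ∈ I n k, |X j ω| ∂(P i) ≤ N * C := by
        rw [integral_finset_sum _ fun j _ => (hXint j).abs]
        calc ∑ j ∈ I n k, ∫ ω, |X j ω| ∂(P i) ≤ ∑ _j ∈ I n k, C :=
              Finset.sum_le_sum fun j _ => hmean j
          _ = N * C := by simp [hNdef, mul_comm]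
      calc |coef| * ∫ ω, ∑ j ∈ I n k, |X j ω| ∂(P i)
          ≤ (N * n)⁻¹ * (N * C) :=
            mul_le_mul hcoef_abs h1 (integral_nonneg fun ω => by positivity)
              (by positivity)
        _ = C / n := by field_simp
    have hmarkov := mul_meas_ge_le_integral_of_nonneg
      (Eventually.of_forall (fun ω => by positivity :
        ∀ ω, 0 ≤ |coef| * ∑ j ∈ I n k, |X j ω|)) hfint t
    have hsub : {ω | t ≤ |coef * ∑ j ∈ I n k, X j ω|} ⊆
        {ω | t ≤ |coef| * ∑ j ∈ I n k, |X j ω|} := by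
      intro ω hω
      simp only [Set.mem_setOf_eq] at hω ⊢
      refine le_trans hω ?_
      rw [abs_mul]
      exact mul_le_mul_of_nonneg_left (Finset.abs_sum_le_sum_abs _ _) (abs_nonneg _)
    have hbound : (P i {ω | t ≤ |coef * ∑ j ∈ I n k, X j ω|}).toReal
        ≤ C / ε * (n:ℝ) ^ (δ - 1) := by
      have h1 : (P i {ω | t ≤ |coef * ∑ j ∈ I n k, X j ω|}).toReal
          ≤ (P i {ω | t ≤ |coef| * ∑ j ∈ I n k, |X j ω|}).toReal :=
        ENNReal.toReal_mono (measure_ne_top _ _) (measure_mono hsub)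
      have h2 : t * (P i {ω | t ≤ |coef| * ∑ j ∈ I n k, |X j ω|}).toReal ≤ C / n :=
        le_trans hmarkov hintegral
      have h3 : (P i {ω | t ≤ |coef| * ∑ j ∈ I n k, |X j ω|}).toReal ≤ (C / n) / t := by
        rw [le_div_iff₀ htpos]; linarith
      refine le_trans h1 (le_trans h3 (le_of_eq ?_))
      rw [htdef, Real.rpow_sub hnpos, Real.rpow_one, Real.rpow_neg (le_of_lt hnpos)]
      field_simp
    rw [← ENNReal.ofReal_toReal (measure_ne_top (P i) _)]
    exact ENNReal.ofReal_le_ofReal hbound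
  -- decomposition of the global error
  have hdecomp : ∀ n (ω : Ω),
      (K : ℝ)⁻¹ * ∑ k, Y n k ω - (n : ℝ)⁻¹ * ∑ i ∈ Finset.range n, X i ω
      = ∑ k : Fin K, ((K:ℝ)⁻¹ * (Y n k ω - ((I n k).card : ℝ)⁻¹ * ∑ i ∈ I n k, X i ω)
        + ((K:ℝ)⁻¹ * (((I n k).card : ℝ))⁻¹ - (n:ℝ)⁻¹) * ∑ i ∈ I n k, X i ω) := by
    intro n ω
    have hsum : ∑ i ∈ Finset.range n, X i ω = ∑ k : Fin K, ∑ i ∈ I n k, X i ω := by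
      rw [← hcover n, Finset.sum_biUnion]
      intro k _ k' _ hkk'
      exact hdisj n k k' hkk'
    rw [hsum, Finset.mul_sum, Finset.mul_sum, ← Finset.sum_sub_distrib]
    exact Finset.sum_congr rfl fun k _ => by ring
  have hAB : littleOP P
      (fun n ω => ∑ k : Fin K,
        ((K:ℝ)⁻¹ * (Y n k ω - ((I n k).card : ℝ)⁻¹ * ∑ i ∈ I n k, X i ω)
          + ((K:ℝ)⁻¹ * (((I n k).card : ℝ))⁻¹ - (n:ℝ)⁻¹) * ∑ i ∈ I n k, X i ω))
      (fun n => (n : ℝ) ^ (-δ)) :=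
    littleOP.finsetSum Finset.univ _ hapos (fun k _ => (hA k).add (hB k))
  exact littleOP_congr (fun n ω => (hdecomp n ω).symm) hAB
end

section
/- Let 𝒫 be a family of probability measures, let 𝒳 ⊆ ℝ^d be closed, and let (X_n)_{n∈ℕ} and (Y_n)_{n∈ℕ} be sequences of random vectors taking values in 𝒳 with ‖X_n − Y_n‖ = o_𝒫(1). Let h : 𝒳 → ℝ be continuous, and suppose at least one of the following holds: (a) h is uniformly continuous on 𝒳, or (b) ‖Y_n‖ = O_𝒫(1). Then h(X_n) = h(Y_n) + o_𝒫(1). -/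
open MeasureTheory Filter

/-- `X_n = O_𝒫(a_n)`: for every `ε > 0` there exist `M > 0` and `N` such that
`sup_{n ≥ N} sup_{P ∈ 𝒫} P(|X_n| ≥ a_n M) < ε`. -/
def bigOP {Ω ι : Type*} [MeasurableSpace Ω] (P : ι → Measure Ω)
    (X : ℕ → Ω → ℝ) (a : ℕ → ℝ) : Prop :=
  ∀ ε : ℝ, 0 < ε → ∃ M : ℝ, 0 < M ∧ ∃ N : ℕ, ∀ n, N ≤ n →
    (⨆ i, P i {ω | a n * M ≤ |X n ω|}) < ENNReal.ofReal ε

/-- Distributionally uniform continuous mapping: if `X_n, Y_n` take values in a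
closed set `𝒳 ⊆ ℝ^d`, `‖X_n − Y_n‖ = o_𝒫(1)`, `h : 𝒳 → ℝ` is continuous, and
either (a) `h` is uniformly continuous on `𝒳`, or (b) `‖Y_n‖ = O_𝒫(1)`, then
`h(X_n) = h(Y_n) + o_𝒫(1)`. -/
theorem stmt10 {Ω ι : Type*} [MeasurableSpace Ω] (P : ι → Measure Ω)
    (d : ℕ) (𝒳 : Set (EuclideanSpace ℝ (Fin d))) (h𝒳 : IsClosed 𝒳)
    (X Y : ℕ → Ω → EuclideanSpace ℝ (Fin d))
    (hX𝒳 : ∀ n ω, X n ω ∈ 𝒳) (hY𝒳 : ∀ n ω, Y n ω ∈ 𝒳)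
    (hXY : littleOP P (fun n ω => ‖X n ω - Y n ω‖) (fun _ => 1))
    (h : EuclideanSpace ℝ (Fin d) → ℝ) (hcont : ContinuousOn h 𝒳)
    (hcase : UniformContinuousOn h 𝒳 ∨ bigOP P (fun n ω => ‖Y n ω‖) (fun _ => 1)) :
    littleOP P (fun n ω => h (X n ω) - h (Y n ω)) (fun _ => 1) := by
  intro ε hε
  rcases hcase with hu | hb
  · rw [Metric.uniformContinuousOn_iff] at hu
    obtain ⟨δ, hδ, hδ'⟩ := hu ε hε
    have key := hXY δ hδ
    rw [ENNReal.tendsto_nhds_zero] at key ⊢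
    intro η hη
    filter_upwards [key η hη] with n hn
    refine le_trans ?_ hn
    refine iSup_mono fun i => measure_mono fun ω hω => ?_
    simp only [Set.mem_setOf_eq, one_mul, abs_norm] at hω ⊢
    by_contra hc
    push_neg at hc
    have h2 := hδ' (X n ω) (hX𝒳 n ω) (Y n ω) (hY𝒳 n ω) (by rwa [dist_eq_norm])
    rw [Real.dist_eq] at h2
    exact absurd hω (not_le.mpr h2)
  · rw [ENNReal.tendsto_nhds_zero]
    intro η hη
    obtain ⟨c, hc0, hcη⟩ := exists_between (ENNReal.half_pos hη.ne')
    have hcT : c ≠ ⊤ := (hcη.trans_le le_top).ne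
    have hr : 0 < c.toReal := ENNReal.toReal_pos hc0.ne' hcT
    obtain ⟨M, hM, N, hN⟩ := hb c.toReal hr
    have hK : IsCompact (𝒳 ∩ Metric.closedBall 0 (M + 1)) :=
      (isCompact_closedBall (0 : EuclideanSpace ℝ (Fin d)) (M + 1)).inter_left h𝒳
    have hu : UniformContinuousOn h (𝒳 ∩ Metric.closedBall 0 (M + 1)) :=
      hK.uniformContinuousOn_of_continuous (hcont.mono Set.inter_subset_left)
    rw [Metric.uniformContinuousOn_iff] at hu
    obtain ⟨δ, hδ, hδ'⟩ := hu ε hε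
    set δ' := min δ 1 with hδ'def
    have hδ'pos : 0 < δ' := lt_min hδ one_pos
    have key := hXY δ' hδ'pos
    rw [ENNReal.tendsto_nhds_zero] at key
    filter_upwards [key (η / 2) (ENNReal.half_pos hη.ne'), eventually_ge_atTop N]
      with n h1 h2
    have hincl : {ω | (1 : ℝ) * ε ≤ |h (X n ω) - h (Y n ω)|} ⊆
        {ω | (1 : ℝ) * M ≤ |‖Y n ω‖|} ∪ {ω | (1 : ℝ) * δ' ≤ |‖X n ω - Y n ω‖|} := by
      intro ω hω
      by_contra hc
      simp only [Set.mem_union, Set.mem_setOf_eq, one_mul, abs_norm, not_or, not_le] at hc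
      obtain ⟨hY1, hXY1⟩ := hc
      have hYK : Y n ω ∈ 𝒳 ∩ Metric.closedBall 0 (M + 1) := by
        refine ⟨hY𝒳 n ω, ?_⟩
        rw [Metric.mem_closedBall, dist_zero_right]
        linarith
      have hXK : X n ω ∈ 𝒳 ∩ Metric.closedBall 0 (M + 1) := by
        refine ⟨hX𝒳 n ω, ?_⟩
        rw [Metric.mem_closedBall, dist_zero_right]
        have h3 : ‖X n ω‖ - ‖Y n ω‖ ≤ ‖X n ω - Y n ω‖ := norm_sub_norm_le _ _
        have h4 : δ' ≤ 1 := min_le_right _ _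
        linarith
      have h5 := hδ' (X n ω) hXK (Y n ω) hYK
        (by rw [dist_eq_norm]; exact hXY1.trans_le (min_le_left _ _))
      rw [Real.dist_eq] at h5
      simp only [Set.mem_setOf_eq, one_mul] at hω
      exact absurd hω (not_le.mpr h5)
    calc (⨆ i, P i {ω | (1 : ℝ) * ε ≤ |h (X n ω) - h (Y n ω)|})
        ≤ (⨆ i, P i {ω | (1 : ℝ) * M ≤ |‖Y n ω‖|}) +
          (⨆ i, P i {ω | (1 : ℝ) * δ' ≤ |‖X n ω - Y n ω‖|}) := by
          refine iSup_le fun i => ?_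
          refine ((measure_mono hincl).trans (measure_union_le _ _)).trans ?_
          exact add_le_add (le_iSup (fun i => P i _) i) (le_iSup (fun i => P i _) i)
      _ ≤ η / 2 + η / 2 := by
          refine add_le_add ?_ h1
          refine le_of_lt ((hN n h2).trans_le ?_)
          rw [ENNReal.ofReal_toReal hcT]
          exact hcη.le
      _ = η := ENNReal.add_halves η
end

section
/- Let 𝒵 ⊆ Δ^{d−1} := {z ∈ [0,1]^d : Σ_j z^j = 1}, let (Y, Z) be random variables taking values in ℝ × 𝒵 with E[|Y|] < ∞, let f be a version of z ↦ E[Y | Z = z], and let ψ : 𝒵 × {0, 1} → Δ^{d−1} be a measurable binary perturbation with ψ(z, 0) = z for all z. Define L := 1{Z = ψ(Z, 1)} and W := ψ(Z, 1). Then almost surely E[Y · L | W] = f(W) · E[L | W]; in particular, on the event {E[L | W] > 0}, E[Y | L = 1, W] := E[Y L | W]/E[L | W] = f(W) almost surely. Consequently, if P(Z ≠ ψ(Z, 1)) > 0 and z ↦ ψ(z, 1) preserves null sets of the distribution of Z, the average binary perturbation effect λ_ψ := (E[f(ψ(Z, 1))] − E[Y]) / P(Z ≠ ψ(Z, 1))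 satisfies λ_ψ = (E[E[Y | L = 1, W]] − E[Y]) / P(L = 0). -/
open MeasureTheory

/-- For a binary perturbation `ψ` with `L = 1{Z = ψ(Z,1)}` and `W = ψ(Z,1)`:
`E[Y L | W] = f(W) E[L | W]` a.s.; on `{E[L | W] > 0}` the ratio
`E[Y L | W]/E[L | W]` equals `f(W)` a.s.; and consequently the average binary
perturbation effect `λ_ψ = (E[f(ψ(Z,1))] − E[Y])/P(Z ≠ ψ(Z,1))` equals
`(E[E[Y | L = 1, W]] − E[Y])/P(L = 0)`. -/
theorem stmt14
    {Ω : Type*} [inst : MeasurableSpace Ω] (P : Measure Ω) [IsProbabilityMeasure P]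
    (d : ℕ) (hd : 2 ≤ d)
    (𝒵 : Set (Fin d → ℝ)) (h𝒵 : 𝒵 ⊆ simplex d)
    (Z : Ω → (Fin d → ℝ)) (hZm : Measurable Z) (hZ𝒵 : ∀ a, Z a ∈ 𝒵)
    (Y : Ω → ℝ) (hYm : Measurable Y) (hYint : Integrable Y P)
    (ψ : (Fin d → ℝ) → Fin 2 → (Fin d → ℝ))
    (hψm : Measurable fun z => ψ z 1)
    (hψ0 : ∀ z ∈ 𝒵, ψ z 0 = z) (hψΔ : ∀ z ∈ 𝒵, ψ z 1 ∈ simplex d)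
    (f : (Fin d → ℝ) → ℝ) (hfm : Measurable f)
    (hf : P[Y | MeasurableSpace.comap Z inferInstance] =ᵐ[P] fun a => f (Z a))
    (L : Ω → ℝ) (hL : ∀ a, L a = if Z a = ψ (Z a) 1 then 1 else 0)
    (W : Ω → (Fin d → ℝ)) (hW : ∀ a, W a = ψ (Z a) 1)
    (hpos : 0 < P {a | Z a ≠ ψ (Z a) 1})
    (hnull : ∀ A : Set (Fin d → ℝ), MeasurableSet A →
      Measure.map Z P A = 0 → P {a | ψ (Z a) 1 ∈ A} = 0) :
    (P[(fun a => Y a * L a) | MeasurableSpace.comap W inferInstance] =ᵐ[P]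
      fun a => f (W a) * (P[L | MeasurableSpace.comap W inferInstance]) a) ∧
    (∀ᵐ a ∂P, 0 < (P[L | MeasurableSpace.comap W inferInstance]) a →
      (P[(fun a' => Y a' * L a') | MeasurableSpace.comap W inferInstance]) a /
        (P[L | MeasurableSpace.comap W inferInstance]) a = f (W a)) ∧
    (∫ a, f (ψ (Z a) 1) ∂P - ∫ a, Y a ∂P) / (P {a | Z a ≠ ψ (Z a) 1}).toReal =
      (∫ a, f (W a) ∂P - ∫ a, Y a ∂P) / (P {a | L a = 0}).toReal := by
  have hWeq : W = (fun z => ψ z 1) ∘ Z := funext hW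
  have hWm : Measurable W := by rw [hWeq]; exact hψm.comp hZm
  have hmWle : MeasurableSpace.comap W inferInstance ≤ inst := hWm.comap_le
  have hmZle : MeasurableSpace.comap Z inferInstance ≤ inst := hZm.comap_le
  have hmWZ : MeasurableSpace.comap W inferInstance ≤
      MeasurableSpace.comap Z inferInstance := by
    rw [hWeq, ← MeasurableSpace.comap_comp]
    exact MeasurableSpace.comap_mono hψm.comap_le
  have hgLm : Measurable (fun z : Fin d → ℝ => if z = ψ z 1 then (1:ℝ) else 0) :=
    Measurable.ite (measurableSet_eq_fun measurable_id hψm) measurable_const measurable_const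
  have hLeq : L = (fun z : Fin d → ℝ => if z = ψ z 1 then (1:ℝ) else 0) ∘ Z := funext hL
  have hLm : Measurable L := by rw [hLeq]; exact hgLm.comp hZm
  have hLsm : StronglyMeasurable[MeasurableSpace.comap Z inferInstance] L := by
    rw [hLeq]
    exact (hgLm.comp (measurable_iff_comap_le.mpr le_rfl)).stronglyMeasurable
  have hLbd : ∀ a, |L a| ≤ 1 := by
    intro a; rw [hL]; split_ifs <;> simp
  have hLZ : ∀ a, L a * f (Z a) = f (W a) * L a := by
    intro a
    rw [hL, hW]
    split_ifs with h
    · rw [← h]; ring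
    · ring
  have hLint : Integrable L P := by
    refine (integrable_const (1:ℝ)).mono hLm.aestronglyMeasurable ?_
    filter_upwards with a
    simpa using hLbd a
  have hYLint : Integrable (fun a => Y a * L a) P := by
    refine hYint.mono (hYm.mul hLm).aestronglyMeasurable ?_
    filter_upwards with a
    rw [Real.norm_eq_abs, Real.norm_eq_abs, abs_mul]
    calc |Y a| * |L a| ≤ |Y a| * 1 :=
          mul_le_mul_of_nonneg_left (hLbd a) (abs_nonneg _)
      _ = |Y a| := mul_one _
  have hfZint : Integrable (fun a => f (Z a)) P := integrable_condExp.congr hf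
  have hfWLint : Integrable ((fun a => f (W a)) * L) P := by
    refine hfZint.mono ((hfm.comp hWm).mul hLm).aestronglyMeasurable ?_
    filter_upwards with a
    rw [Pi.mul_apply, Real.norm_eq_abs, Real.norm_eq_abs, ← hLZ a, abs_mul]
    calc |L a| * |f (Z a)| ≤ 1 * |f (Z a)| :=
          mul_le_mul_of_nonneg_right (hLbd a) (abs_nonneg _)
      _ = |f (Z a)| := one_mul _
  have hfWsm : StronglyMeasurable[MeasurableSpace.comap W inferInstance]
      (fun a => f (W a)) :=
    (hfm.comp (measurable_iff_comap_le.mpr le_rfl)).stronglyMeasurable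
  have part1 : P[(fun a => Y a * L a) | MeasurableSpace.comap W inferInstance] =ᵐ[P]
      fun a => f (W a) * (P[L | MeasurableSpace.comap W inferInstance]) a := by
    have tower : P[(fun a => Y a * L a) | MeasurableSpace.comap W inferInstance]
        =ᵐ[P] P[ P[(fun a => Y a * L a) | MeasurableSpace.comap Z inferInstance] |
          MeasurableSpace.comap W inferInstance] :=
      (condExp_condExp_of_le hmWZ hmZle).symm
    have hLYeq : (fun a => Y a * L a) = L * Y := by
      funext a; exact mul_comm _ _
    have hLYint : Integrable (L * Y) P := by rw [← hLYeq]; exact hYLint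
    have pull1 : P[(fun a => Y a * L a) | MeasurableSpace.comap Z inferInstance]
        =ᵐ[P] L * P[Y | MeasurableSpace.comap Z inferInstance] := by
      rw [hLYeq]
      exact condExp_mul_of_stronglyMeasurable_left hLsm hLYint hYint
    have eq2 : L * P[Y | MeasurableSpace.comap Z inferInstance]
        =ᵐ[P] (fun a => f (W a)) * L := by
      filter_upwards [hf] with a ha
      rw [Pi.mul_apply, Pi.mul_apply, ha]
      exact hLZ a
    have pull2 : P[((fun a => f (W a)) * L) | MeasurableSpace.comap W inferInstance]
        =ᵐ[P] (fun a => f (W a)) * P[L | MeasurableSpace.comap W inferInstance] :=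
      condExp_mul_of_stronglyMeasurable_left hfWsm hfWLint hLint
    calc P[(fun a => Y a * L a) | MeasurableSpace.comap W inferInstance]
        =ᵐ[P] P[ P[(fun a => Y a * L a) | MeasurableSpace.comap Z inferInstance] |
          MeasurableSpace.comap W inferInstance] := tower
      _ =ᵐ[P] P[((fun a => f (W a)) * L) | MeasurableSpace.comap W inferInstance] :=
          condExp_congr_ae (pull1.trans eq2)
      _ =ᵐ[P] (fun a => f (W a)) * P[L | MeasurableSpace.comap W inferInstance] := pull2
      _ = fun a => f (W a) * (P[L | MeasurableSpace.comap W inferInstance]) a := rfl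
  refine ⟨part1, ?_, ?_⟩
  · filter_upwards [part1] with a ha hposa
    rw [ha]
    exact mul_div_cancel_right₀ (f (W a)) hposa.ne'
  · have hset : {a | L a = 0} = {a | Z a ≠ ψ (Z a) 1} := by
      ext a
      simp only [Set.mem_setOf_eq, hL]
      split_ifs with h
      · exact ⟨fun h10 => absurd h10 one_ne_zero, fun hne => absurd h hne⟩
      · simp [h]
    simp only [hW]
    rw [hset]
end

section
/- Let 𝒵 ⊆ Δ^{d−1} := {z ∈ [0,1]^d : Σ_j z^j = 1}, let (Y, Z) be random variables in ℝ × 𝒵 with E[|Y|] < ∞, let f be a version of z ↦ E[Y | Z = z], and let ψ : 𝒵 × {0,1} → Δ^{d−1} be a measurable binary perturbation with ψ(z, 0) = z, such that P(Z ≠ ψ(Z, 1)) > 0 and z ↦ ψ(z, 1) preserves null sets of the law of Z. Define L := 1{Z = ψ(Z, 1)} and W := ψ(Z, 1), and suppose there exists θ ∈ ℝ such that f(ψ(Z, 1)) − f(Z) = θ almost surely on the event {L = 0}. Then the average binary perturbation effect λ_ψ := (E[f(ψ(Z, 1))] − E[Y]) / P(Z ≠ ψ(Z, 1)) equals θ,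 and moreover E[Y | Z] = θ L + h(W) almost surely, where h(W) := f(W) − θ; i.e., (Y, L, W) follows a partially linear model with coefficient θ on L. -/
open MeasureTheory

/-- If `f(ψ(Z,1)) − f(Z)` is a.s. constant equal to `θ` on `{L = 0}` (where
`L = 1{Z = ψ(Z,1)}` and `W = ψ(Z,1)` for a binary perturbation `ψ`), then the
average binary perturbation effect `λ_ψ = (E[f(ψ(Z,1))] − E[Y])/P(Z ≠ ψ(Z,1))`
equals `θ`, and `E[Y | Z] = θ L + h(W)` a.s. with `h(W) = f(W) − θ`, i.e.
`(Y, L, W)` follows a partially linear model with coefficient `θ` on `L`. -/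
theorem stmt15
    {Ω : Type*} [MeasurableSpace Ω] (P : Measure Ω) [IsProbabilityMeasure P]
    (d : ℕ) (hd : 2 ≤ d)
    (𝒵 : Set (Fin d → ℝ)) (h𝒵 : 𝒵 ⊆ simplex d)
    (Z : Ω → (Fin d → ℝ)) (hZm : Measurable Z) (hZ𝒵 : ∀ a, Z a ∈ 𝒵)
    (Y : Ω → ℝ) (hYm : Measurable Y) (hYint : Integrable Y P)
    (ψ : (Fin d → ℝ) → Fin 2 → (Fin d → ℝ))
    (hψm : Measurable fun z => ψ z 1)
    (hψ0 : ∀ z ∈ 𝒵, ψ z 0 = z) (hψΔ : ∀ z ∈ 𝒵, ψ z 1 ∈ simplex d)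
    (hpos : 0 < P {a | Z a ≠ ψ (Z a) 1})
    (hnull : ∀ A : Set (Fin d → ℝ), MeasurableSet A →
      Measure.map Z P A = 0 → P {a | ψ (Z a) 1 ∈ A} = 0)
    (f : (Fin d → ℝ) → ℝ) (hfm : Measurable f)
    (hf : P[Y | MeasurableSpace.comap Z inferInstance] =ᵐ[P] fun a => f (Z a))
    (L : Ω → ℝ) (hL : ∀ a, L a = if Z a = ψ (Z a) 1 then 1 else 0)
    (W : Ω → (Fin d → ℝ)) (hW : ∀ a, W a = ψ (Z a) 1)
    (θ : ℝ)
    (hθ : ∀ᵐ a ∂P, L a = 0 → f (ψ (Z a) 1) - f (Z a) = θ) :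
    (∫ a, f (ψ (Z a) 1) ∂P - ∫ a, Y a ∂P) /
        (P {a | Z a ≠ ψ (Z a) 1}).toReal = θ ∧
    (P[Y | MeasurableSpace.comap Z inferInstance] =ᵐ[P]
      fun a => θ * L a + (f (W a) - θ)) := by
  have hSm : MeasurableSet {a | Z a ≠ ψ (Z a) 1} :=
    (measurableSet_eq_fun hZm (hψm.comp hZm)).compl
  set S := {a | Z a ≠ ψ (Z a) 1} with hS
  have key : (fun a => f (ψ (Z a) 1)) =ᵐ[P]
      ((fun a => f (Z a)) + S.indicator (fun _ => θ)) := by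
    filter_upwards [hθ] with a ha
    by_cases h : Z a = ψ (Z a) 1
    · have hnot : a ∉ S := fun hc => hc h
      simp only [Pi.add_apply, Set.indicator_of_notMem hnot, add_zero, ← h]
    · have hin : a ∈ S := h
      have := ha (by simp [hL a, h])
      simp only [Pi.add_apply, Set.indicator_of_mem hin]
      linarith
  have hle : MeasurableSpace.comap Z inferInstance ≤ ‹MeasurableSpace Ω› :=
    hZm.comap_le
  have hfZint : Integrable (fun a => f (Z a)) P :=
    (integrable_condExp).congr hf
  have hindint : Integrable (S.indicator (fun _ => θ)) P :=
    (integrable_const θ).indicator hSm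
  have hψint : Integrable (fun a => f (ψ (Z a) 1)) P :=
    (hfZint.add hindint).congr key.symm
  have hEfZ : ∫ a, f (Z a) ∂P = ∫ a, Y a ∂P := by
    rw [← integral_congr_ae hf, integral_condExp hle]
  have hEψ : ∫ a, f (ψ (Z a) 1) ∂P = ∫ a, Y a ∂P + θ * (P S).toReal := by
    rw [integral_congr_ae key]
    simp only [Pi.add_apply]
    rw [integral_add hfZint hindint, hEfZ,
      integral_indicator_const θ hSm, smul_eq_mul, mul_comm]
    rfl
  have ht : (P S).toReal ≠ 0 :=
    (ENNReal.toReal_pos hpos.ne' (measure_ne_top P _)).ne'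
  constructor
  · rw [hEψ]
    field_simp
    ring
  · refine hf.trans ?_
    filter_upwards [hθ] with a ha
    by_cases h : Z a = ψ (Z a) 1
    · rw [hL a, hW a, if_pos h, ← h]; ring
    · have := ha (by simp [hL a, h])
      simp only [hL a, hW a, if_neg h]
      linarith
end

section
/- Let d ≥ 2 and let A, B be disjoint nonempty subsets of {1, …, d} with A ∪ B = {1, …, d}. Let X ∈ ℝ^d have all coordinates nonnegative with ‖X^A‖₁ > 0 and ‖X^B‖₁ > 0, where X^A denotes the restriction of X to coordinates in A and ‖·‖₁ the sum of absolute values. Let u_B := Σ_{j∈B} e_j, let ⊙ denote the componentwise product, and 𝖢(x) := x/‖x‖₁ the simplex closure operator. Then the derivative at c = 0 of c ↦ 𝖢(X ⊙ (1 + c u_B)) exists and its ℓ¹-norm equals 2 ‖X^A‖₁ ‖X^B‖₁ / (‖X^A‖₁ + ‖X^B‖₁)². -/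
/-- The simplex closure operator `𝖢(x) = x/‖x‖₁` with `‖x‖₁ = Σ_k |x^k|`. -/
noncomputable def simplexClosure {d : ℕ} (x : Fin d → ℝ) : Fin d → ℝ :=
  (∑ k, |x k|)⁻¹ • x

/-- General multiplicative amalgamation speed: for disjoint nonempty `A, B`
covering `{1,…,d}` and a nonnegative absolute abundance vector `X` with
`‖X^A‖₁ > 0` and `‖X^B‖₁ > 0`, the curve `c ↦ 𝖢(X ⊙ (1 + c u_B))` is
differentiable at `c = 0` and the ℓ¹-norm of its derivative equals
`2 ‖X^A‖₁ ‖X^B‖₁ / (‖X^A‖₁ + ‖X^B‖₁)²`. -/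
theorem stmt17
    (d : ℕ) (hd : 2 ≤ d)
    (A B : Finset (Fin d)) (hAB : Disjoint A B)
    (hA : A.Nonempty) (hB : B.Nonempty) (hcover : A ∪ B = Finset.univ)
    (X : Fin d → ℝ) (hX : ∀ k, 0 ≤ X k)
    (hXA : 0 < ∑ k ∈ A, |X k|) (hXB : 0 < ∑ k ∈ B, |X k|) :
    ∃ D : Fin d → ℝ,
      HasDerivAt (fun c : ℝ =>
        simplexClosure (fun k => X k * (1 + c * (if k ∈ B then (1 : ℝ) else 0)))) D 0 ∧
      ∑ k, |D k| =
        2 * (∑ k ∈ A, |X k|) * (∑ k ∈ B, |X k|) /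
          ((∑ k ∈ A, |X k|) + (∑ k ∈ B, |X k|)) ^ 2 := by
  set a : ℝ := ∑ k ∈ A, |X k| with ha_def
  set b : ℝ := ∑ k ∈ B, |X k| with hb_def
  set S : ℝ := a + b with hS_def
  have hS : 0 < S := by positivity
  have hSne : S ≠ 0 := ne_of_gt hS
  -- the derivative
  refine ⟨fun k => (X k * (if k ∈ B then (1 : ℝ) else 0) * S - X k * b) / S ^ 2, ?_, ?_⟩
  · -- the nice local formula
    set g : ℝ → Fin d → ℝ := fun c k =>
      X k * (1 + c * (if k ∈ B then (1 : ℝ) else 0)) / (S + c * b) with hg_def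
    have hgderiv : HasDerivAt g
        (fun k => (X k * (if k ∈ B then (1 : ℝ) else 0) * S - X k * b) / S ^ 2) 0 := by
      rw [hasDerivAt_pi]
      intro k
      have h1 : HasDerivAt (fun c : ℝ => X k * (1 + c * (if k ∈ B then (1 : ℝ) else 0)))
          (X k * (if k ∈ B then (1 : ℝ) else 0)) 0 := by
        simpa using (((hasDerivAt_id (0 : ℝ)).mul_const
          (if k ∈ B then (1 : ℝ) else 0)).const_add 1).const_mul (X k)
      have h2 : HasDerivAt (fun c : ℝ => S + c * b) b 0 := by
        simpa using ((hasDerivAt_id (0 : ℝ)).mul_const b).const_add S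
      have h3 := h1.div h2 (by simpa using hSne)
      convert h3 using 1
      · rfl
      · funext c; rfl
      · simp
    have heq : (fun c : ℝ =>
        simplexClosure (fun k => X k * (1 + c * (if k ∈ B then (1 : ℝ) else 0)))) =ᶠ[nhds 0] g := by
      filter_upwards [Ioi_mem_nhds (show (-1 : ℝ) < 0 by norm_num)] with c hc
      have hc1 : (0 : ℝ) ≤ 1 + c := by linarith [Set.mem_Ioi.mp hc]
      have hsum : (∑ k, |X k * (1 + c * (if k ∈ B then (1 : ℝ) else 0))|) = S + c * b := by
        rw [← hcover, Finset.sum_union hAB]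
        have hA' : ∀ k ∈ A, |X k * (1 + c * (if k ∈ B then (1 : ℝ) else 0))| = |X k| := by
          intro k hk
          have : k ∉ B := Finset.disjoint_left.mp hAB hk
          simp [this]
        have hB' : ∀ k ∈ B, |X k * (1 + c * (if k ∈ B then (1 : ℝ) else 0))| =
            |X k| * (1 + c) := by
          intro k hk
          rw [if_pos hk, mul_one, abs_mul, abs_of_nonneg hc1]
        rw [Finset.sum_congr rfl hA', Finset.sum_congr rfl hB', ← Finset.sum_mul]
        rw [hS_def, ha_def, hb_def]; ring
      funext k
      simp only [simplexClosure, hsum, Pi.smul_apply, smul_eq_mul, hg_def]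
      rw [div_eq_inv_mul]
    exact hgderiv.congr_of_eventuallyEq heq
  · -- the norm computation
    have hb0 : 0 < b := hXB
    have ha0 : 0 < a := hXA
    have hS2 : (0:ℝ) < S ^ 2 := by positivity
    rw [← hcover, Finset.sum_union hAB]
    have hA' : ∀ k ∈ A, |(X k * (if k ∈ B then (1 : ℝ) else 0) * S - X k * b) / S ^ 2| =
        |X k| * b / S ^ 2 := by
      intro k hk
      have hkB : k ∉ B := Finset.disjoint_left.mp hAB hk
      rw [if_neg hkB, abs_div, abs_of_pos hS2, mul_zero, zero_mul, zero_sub, abs_neg,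
        abs_mul, abs_of_pos hb0]
    have hB' : ∀ k ∈ B, |(X k * (if k ∈ B then (1 : ℝ) else 0) * S - X k * b) / S ^ 2| =
        |X k| * a / S ^ 2 := by
      intro k hk
      rw [if_pos hk, mul_one]
      have : X k * S - X k * b = X k * a := by rw [hS_def]; ring
      rw [this, abs_div, abs_of_pos hS2, abs_mul, abs_of_pos ha0]
    rw [Finset.sum_congr rfl hA', Finset.sum_congr rfl hB']
    rw [← Finset.sum_div, ← Finset.sum_div, ← Finset.sum_mul, ← Finset.sum_mul]
    ring
end

section
/- Let d ≥ 2, Δ^{d−1} := {z ∈ [0,1]^d : Σ_j z^j = 1}, z_cen := (1/d, …, 1/d), and let z ∈ Δ^{d−1} with z ≠ z_cen. Define the Gini coefficient G(w) := (1/(2d)) Σ_{j=1}^d Σ_{k=1}^d |w^j − w^k|, the direction v := (z_cen − z)/‖z_cen − z‖₁, and the Gini speed s := 2d / ( Σ_{j=1}^d Σ_{k=1}^d |v^j − v^k| ). Then the denominator of s is strictly positive, z + γ s v ∈ Δ^{d−1} for all γ ∈ [0, ‖z_cen − z‖₁/s], and for all such γ one has G(z + γ s v) = G(z) − γ. In particular,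 the derivative of γ ↦ 1 − G(z + γ s v) at γ = 0 equals 1, so the statistic 1 − G is derivative-isolated by the centering perturbation with Gini speed. -/
set_option maxHeartbeats 1000000


/-- The centering perturbation with Gini speed isolates the diversity statistic
`1 − G`: with direction `v = (z_cen − z)/‖z_cen − z‖₁` and Gini speed
`s = 2d/Σ_{j,k} |v^j − v^k|`, the perturbed point `z + γ s v` stays in the
simplex for `γ ∈ [0, ‖z_cen − z‖₁/s]` and satisfies
`G(z + γ s v) = G(z) − γ`; in particular `γ ↦ 1 − G(z + γ s v)` has
derivative `1` at `γ = 0`. -/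
theorem stmt18
    (d : ℕ) (hd : 2 ≤ d)
    (z : Fin d → ℝ) (hz : z ∈ simplex d)
    (zcen : Fin d → ℝ) (hzcen : zcen = fun _ => (d : ℝ)⁻¹)
    (hzne : z ≠ zcen)
    (G : (Fin d → ℝ) → ℝ)
    (hG : ∀ w, G w = (2 * (d : ℝ))⁻¹ * ∑ j, ∑ k, |w j - w k|)
    (v : Fin d → ℝ) (hv : v = (l1norm (zcen - z))⁻¹ • (zcen - z))
    (s : ℝ) (hs : s = 2 * (d : ℝ) / ∑ j, ∑ k, |v j - v k|) :
    (0 < ∑ j, ∑ k, |v j - v k|) ∧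
    (∀ γ : ℝ, 0 ≤ γ → γ ≤ l1norm (zcen - z) / s →
      z + (γ * s) • v ∈ simplex d) ∧
    (∀ γ : ℝ, 0 ≤ γ → γ ≤ l1norm (zcen - z) / s →
      G (z + (γ * s) • v) = G z - γ) ∧
    HasDerivWithinAt (fun γ : ℝ => 1 - G (z + (γ * s) • v)) 1
      (Set.Icc (0 : ℝ) (l1norm (zcen - z) / s)) 0 := by
  obtain ⟨hz01, hzsum⟩ := hz
  have hd2 : (2:ℝ) ≤ (d:ℝ) := by exact_mod_cast hd
  have hd0 : (0:ℝ) < (d:ℝ) := by linarith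
  have hdinv : (0:ℝ) < (d:ℝ)⁻¹ := by positivity
  have hdinv1 : (d:ℝ)⁻¹ ≤ 1 := by
    rw [inv_le_one_iff₀]; right; linarith
  set A := ∑ j, ∑ k, |z j - z k| with hAdef
  set L := l1norm (zcen - z) with hLdef
  -- z is not constant
  have hnotconst : ∃ j k : Fin d, z j ≠ z k := by
    by_contra h
    push_neg at h
    apply hzne
    funext j
    have h1 : ∑ k, z k = ∑ _k : Fin d, z j :=
      Finset.sum_congr rfl fun k _ => h k j
    rw [hzsum] at h1
    have h2 : (1:ℝ) = (d:ℝ) * z j := by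
      simpa [Finset.sum_const, Finset.card_univ, mul_comm] using h1
    rw [hzcen]
    field_simp
    linarith
  have hApos : 0 < A := by
    obtain ⟨j, k, hjk⟩ := hnotconst
    have h1 : 0 < |z j - z k| := abs_pos.mpr (sub_ne_zero.mpr hjk)
    calc (0:ℝ) < |z j - z k| := h1
      _ ≤ ∑ k, |z j - z k| :=
          Finset.single_le_sum (f := fun k => |z j - z k|)
            (fun _ _ => abs_nonneg _) (Finset.mem_univ k)
      _ ≤ A :=
          Finset.single_le_sum (f := fun j => ∑ k, |z j - z k|)
            (fun _ _ => Finset.sum_nonneg fun _ _ => abs_nonneg _) (Finset.mem_univ j)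
  have hLpos : 0 < L := by
    have hex : ∃ i, z i ≠ zcen i := by
      by_contra h; push_neg at h; exact hzne (funext h)
    obtain ⟨i, hi⟩ := hex
    have h1 : 0 < |(zcen - z) i| := by
      rw [Pi.sub_apply]
      exact abs_pos.mpr (sub_ne_zero.mpr (Ne.symm hi))
    calc (0:ℝ) < |(zcen - z) i| := h1
      _ ≤ ∑ j, |(zcen - z) j| :=
          Finset.single_le_sum (f := fun j => |(zcen - z) j|)
            (fun _ _ => abs_nonneg _) (Finset.mem_univ i)
  have hvjk : ∀ j k : Fin d, |v j - v k| = L⁻¹ * |z j - z k| := by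
    intro j k
    rw [hv]
    simp only [Pi.smul_apply, Pi.sub_apply, hzcen, smul_eq_mul]
    rw [show L⁻¹ * ((d:ℝ)⁻¹ - z j) - L⁻¹ * ((d:ℝ)⁻¹ - z k) = L⁻¹ * (z k - z j) by ring]
    rw [abs_mul, abs_of_nonneg (le_of_lt (inv_pos.mpr hLpos)), abs_sub_comm]
  have hvsum : ∑ j, ∑ k, |v j - v k| = L⁻¹ * A := by
    rw [hAdef]
    simp_rw [hvjk, ← Finset.mul_sum]
  have hvpos : 0 < ∑ j, ∑ k, |v j - v k| := by
    rw [hvsum]; positivity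
  have hsval : s = 2 * (d:ℝ) * L / A := by
    rw [hs, hvsum]
    field_simp [hLpos.ne', hApos.ne']
  have hspos : 0 < s := by rw [hsval]; positivity
  have hLs : L / s = A / (2 * (d:ℝ)) := by
    rw [hsval]
    field_simp
  -- coordinates of perturbed point
  have hw : ∀ (γ : ℝ) (j : Fin d),
      (z + (γ * s) • v) j
        = (1 - γ * (2 * (d:ℝ) / A)) * z j + (γ * (2 * (d:ℝ) / A)) * (d:ℝ)⁻¹ := by
    intro γ j
    simp only [Pi.add_apply, Pi.smul_apply, hv, Pi.sub_apply, hzcen, smul_eq_mul]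
    rw [hsval]
    field_simp [hLpos.ne', hApos.ne']
    ring
  have ht1 : ∀ γ : ℝ, γ ≤ L / s → γ * (2 * (d:ℝ) / A) ≤ 1 := by
    intro γ h1
    rw [hLs] at h1
    calc γ * (2 * (d:ℝ) / A) ≤ (A / (2 * (d:ℝ))) * (2 * (d:ℝ) / A) :=
          mul_le_mul_of_nonneg_right h1 (by positivity)
      _ = 1 := by field_simp
  have hmem : ∀ γ : ℝ, 0 ≤ γ → γ ≤ L / s → z + (γ * s) • v ∈ simplex d := by
    intro γ h0 h1
    have ht0 : 0 ≤ γ * (2 * (d:ℝ) / A) := by positivity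
    have ht1' := ht1 γ h1
    constructor
    · intro j
      rw [hw γ j]
      obtain ⟨hj0, hj1⟩ := hz01 j
      constructor
      · nlinarith
      · nlinarith
    · have : ∀ j : Fin d, (z + (γ * s) • v) j
          = (1 - γ * (2 * (d:ℝ) / A)) * z j + (γ * (2 * (d:ℝ) / A)) * (d:ℝ)⁻¹ := hw γ
      rw [Finset.sum_congr rfl fun j _ => this j]
      rw [Finset.sum_add_distrib, ← Finset.mul_sum, hzsum, Finset.sum_const,
        Finset.card_univ, Fintype.card_fin, nsmul_eq_mul]
      field_simp
      ring
  have hGeq : ∀ γ : ℝ, 0 ≤ γ → γ ≤ L / s → G (z + (γ * s) • v) = G z - γ := by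
    intro γ h0 h1
    have ht1' := ht1 γ h1
    rw [hG, hG]
    have habs : ∀ j k : Fin d,
        |(z + (γ * s) • v) j - (z + (γ * s) • v) k|
          = (1 - γ * (2 * (d:ℝ) / A)) * |z j - z k| := by
      intro j k
      rw [hw γ j, hw γ k]
      rw [show (1 - γ * (2 * (d:ℝ) / A)) * z j + (γ * (2 * (d:ℝ) / A)) * (d:ℝ)⁻¹
          - ((1 - γ * (2 * (d:ℝ) / A)) * z k + (γ * (2 * (d:ℝ) / A)) * (d:ℝ)⁻¹)
          = (1 - γ * (2 * (d:ℝ) / A)) * (z j - z k) by ring]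
      rw [abs_mul, abs_of_nonneg (by linarith)]
    simp_rw [habs, ← Finset.mul_sum]
    rw [← hAdef]
    field_simp
  refine ⟨hvpos, hmem, hGeq, ?_⟩
  have h0mem : (0:ℝ) ≤ L / s := by rw [hLs]; positivity
  have haff : HasDerivWithinAt (fun γ : ℝ => (1 - G z) + γ) 1
      (Set.Icc (0:ℝ) (L / s)) 0 :=
    (hasDerivWithinAt_id 0 _).const_add (1 - G z)
  exact haff.congr
    (fun γ hγ => by rw [hGeq γ hγ.1 hγ.2]; ring)
    (by rw [hGeq 0 le_rfl h0mem]; ring)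
end
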